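/- arXiv:2604.21663 — 7 statements merged into one kernel-verified Lean document; each statement's English description precedes it below -/
import Mathlib

section
/- Let w be a word of length T in ℝ^d and let v¹,…,v^k be non-overlapping subwords of w with total length |v̲| ≥ 1. Then the Lévy–Prokhorov distance between L[w] and L[v̲] = Σ_i (|v^i|/|v̲|)L[v^i] satisfies d_LP(L[w], L[v̲]) ≤ 2·h(|v̲|/T), where h(x) = |1/x − 1| + |1 − x|. -/
/-!
Regrouped, the weighted average `L[v̲]` is the empirical measure of the concatenation of the
subwords, i.e. of the subfamily of letters of `w` indexed by an injection into `Fin T`.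
The Lévy–Prokhorov distance is bounded by `sup_B |μ B - ν B|` (no thickening is needed).
If `B` contains `M` letters of `w` and `N` letters of the subfamily, then `N ≤ M`, `N ≤ |v̲|`
and `M ≤ N + (T - |v̲|)`, whence `|M / T - N / |v̲|| ≤ 1 - |v̲| / T ≤ 2 h(|v̲| / T)`.
-/

open MeasureTheory
open scoped ENNReal

/-- The error-control function `h(x) = |1/x − 1| + |1 − x|`. -/
noncomputable def hfun (x : ℝ) : ℝ := |1 / x - 1| + |1 - x|

open Finset Function

lemma one_sub_le_two_mul_hfun (x : ℝ) : 1 - x ≤ 2 * hfun x := by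
  unfold hfun
  linarith [abs_nonneg (1 / x - 1), abs_nonneg (1 - x), le_abs_self (1 - x)]

lemma abs_div_sub_div_le_one_sub_div {M N V T : ℝ} (hN : 0 ≤ N) (hNV : N ≤ V) (hNM : N ≤ M)
    (hMN : M + V ≤ N + T) (hV : 0 < V) (hVT : V ≤ T) :
    |M / T - N / V| ≤ 1 - V / T := by
  have hT : 0 < T := hV.trans_le hVT
  rw [abs_sub_le_iff, div_sub_div _ _ hT.ne' hV.ne', div_sub_div _ _ hV.ne' hT.ne',
    one_sub_div hT.ne', div_le_div_iff₀ (by positivity) hT,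
    div_le_div_iff₀ (by positivity) hT]
  have hNTV := mul_nonneg hN (sub_nonneg.2 hVT)
  have hVNTV := mul_nonneg (sub_nonneg.2 hNV) (sub_nonneg.2 hVT)
  constructor
  · nlinarith [mul_le_mul_of_nonneg_right hMN hV.le, mul_le_mul_of_nonneg_left hNTV hT.le]
  · nlinarith [mul_le_mul_of_nonneg_left hNM hV.le, mul_le_mul_of_nonneg_left hVNTV hT.le]

lemma card_filter_add_card_le_of_injective {α S : Type*} [Fintype α] [Fintype S]
    [DecidableEq α] {e : S → α} (he : Injective e) (P : α → Prop) [DecidablePred P] :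
    #{a | P a} + Fintype.card S ≤ #{s | P (e s)} + Fintype.card α := by
  have hcover : ({a | P a} : Finset α) ⊆ image e {s | P (e s)} ∪ (univ \ image e univ) := by
    intro a ha
    by_cases hae : a ∈ image e univ
    · obtain ⟨s, -, rfl⟩ := mem_image.1 hae
      exact mem_union_left _ (mem_image_of_mem e (by simpa using ha))
    · exact mem_union_right _ (mem_sdiff.2 ⟨mem_univ a, hae⟩)
  have hsdiff : #(univ \ image e univ) + Fintype.card S = Fintype.card α := by
    rw [card_sdiff_of_subset (subset_univ _), card_image_of_injective _ he, card_univ,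
      card_univ, Nat.sub_add_cancel (Fintype.card_le_of_injective e he)]
  have := (card_le_card hcover).trans (card_union_le _ _)
  rw [card_image_of_injective _ he] at this
  omega

section Measures

variable {X : Type*} [MeasurableSpace X]

lemma levyProkhorovEDist_le_of_forall_measurableSet [PseudoEMetricSpace X] {μ ν : Measure X}
    {δ : ℝ≥0∞} (h : ∀ B, MeasurableSet B → μ B ≤ ν B + δ ∧ ν B ≤ μ B + δ) :
    levyProkhorovEDist μ ν ≤ δ := by
  refine levyProkhorovEDist_le_of_forall μ ν δ fun ε B hδε hε hB => ?_
  have hB_sub : B ⊆ Metric.thickening ε.toReal B :=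
    Metric.self_subset_thickening (ENNReal.toReal_pos (pos_of_gt hδε).ne' hε.ne) B
  exact ⟨(h B hB).1.trans (add_le_add (measure_mono hB_sub) hδε.le),
    (h B hB).2.trans (add_le_add (measure_mono hB_sub) hδε.le)⟩

open Classical in
lemma inv_card_smul_sum_dirac_apply {ι : Type*} [Fintype ι] [Nonempty ι] (x : ι → X)
    {B : Set X} (hB : MeasurableSet B) :
    ((Fintype.card ι : ℝ≥0∞)⁻¹ • ∑ i, Measure.dirac (x i)) B
      = ENNReal.ofReal (#{i | x i ∈ B} / Fintype.card ι) := by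
  simp only [Measure.smul_apply, Measure.finsetSum_apply, Measure.dirac_apply' _ hB,
    Set.indicator_apply, Pi.one_apply, sum_boole, smul_eq_mul]
  rw [ENNReal.ofReal_div_of_pos (by exact_mod_cast Fintype.card_pos), ENNReal.ofReal_natCast,
    ENNReal.ofReal_natCast, ENNReal.div_eq_inv_mul]

lemma sum_div_smul_inv_smul_sum {ι M : Type*} [Fintype ι] [AddCommMonoid M] [Module ℝ≥0∞ M]
    (ℓ : ι → ℕ) (f : (i : ι) → Fin (ℓ i) → M) (c : ℝ≥0∞) :
    ∑ i, ((ℓ i : ℝ≥0∞) / c) • ((ℓ i : ℝ≥0∞)⁻¹ • ∑ a, f i a)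
      = c⁻¹ • ∑ p : (i : ι) × Fin (ℓ i), f p.1 p.2 := by
  rw [← univ_sigma_univ, sum_sigma, smul_sum]
  refine sum_congr rfl fun i _ => ?_
  rcases eq_or_ne (ℓ i) 0 with hi | hi
  · have : IsEmpty (Fin (ℓ i)) := by rw [hi]; infer_instance
    simp
  · rw [smul_smul, ENNReal.div_eq_inv_mul, mul_assoc,
      ENNReal.mul_inv_cancel (by exact_mod_cast hi) (ENNReal.natCast_ne_top _), mul_one]

lemma levyProkhorovEDist_empirical_subfamily_le [PseudoEMetricSpace X] {α S : Type*}
    [Fintype α] [Fintype S] [Nonempty S] (x : α → X) {e : S → α} (he : Injective e) :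
    levyProkhorovEDist ((Fintype.card α : ℝ≥0∞)⁻¹ • ∑ a, Measure.dirac (x a))
        ((Fintype.card S : ℝ≥0∞)⁻¹ • ∑ s, Measure.dirac (x (e s)))
      ≤ ENNReal.ofReal (1 - Fintype.card S / Fintype.card α) := by
  classical
  have : Nonempty α := ⟨e (Classical.arbitrary S)⟩
  refine levyProkhorovEDist_le_of_forall_measurableSet fun B hB => ?_
  rw [inv_card_smul_sum_dirac_apply _ hB, inv_card_smul_sum_dirac_apply _ hB]
  have hcount := card_filter_add_card_le_of_injective he (fun a => x a ∈ B)
  have hNV : #{s | x (e s) ∈ B} ≤ Fintype.card S := card_le_univ _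
  have hNM : #{s | x (e s) ∈ B} ≤ #{a | x a ∈ B} := by
    simpa using card_le_card_of_injOn e (fun s hs => by simpa using hs) he.injOn
  have hSα := Fintype.card_le_of_injective e he
  have key := abs_sub_le_iff.1 <| abs_div_sub_div_le_one_sub_div (Nat.cast_nonneg _)
    (Nat.cast_le.2 hNV) (Nat.cast_le.2 hNM) (by exact_mod_cast hcount)
    (Nat.cast_pos.2 Fintype.card_pos) (Nat.cast_le.2 hSα)
  have hδ : 0 ≤ 1 - (Fintype.card S : ℝ) / Fintype.card α :=
    sub_nonneg.2 (div_le_one_of_le₀ (Nat.cast_le.2 hSα) (Nat.cast_nonneg _))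
  constructor <;> rw [← ENNReal.ofReal_add (by positivity) hδ] <;>
    exact ENNReal.ofReal_le_ofReal (by linarith)

end Measures

theorem stmt8_general {d T k : ℕ} (w : Fin T → EuclideanSpace ℝ (Fin d))
    (ℓ : Fin k → ℕ) (ι : (i : Fin k) → Fin (ℓ i) → Fin T)
    (hinj : ∀ i, Function.Injective (ι i))
    (hdisj : ∀ i i', i ≠ i' → ∀ a a', ι i a ≠ ι i' a')
    (hV : 1 ≤ ∑ i, ℓ i) :
    levyProkhorovDist ((T : ℝ≥0∞)⁻¹ • ∑ i, Measure.dirac (w i))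
        (∑ i, ((ℓ i : ℝ≥0∞) / ((∑ i', ℓ i' : ℕ) : ℝ≥0∞)) •
          ((ℓ i : ℝ≥0∞)⁻¹ • ∑ a, Measure.dirac (w (ι i a))))
      ≤ 2 * hfun (((∑ i', ℓ i' : ℕ) : ℝ) / (T : ℝ)) := by
  set e : (i : Fin k) × Fin (ℓ i) → Fin T := fun p => ι p.1 p.2
  have he : Injective e := by
    rintro ⟨i, a⟩ ⟨j, b⟩ hab
    obtain rfl | hij := eq_or_ne i j
    · exact congrArg (Sigma.mk i) (hinj i hab)
    · exact absurd hab (hdisj i j hij a b)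
  have hcard : Fintype.card ((i : Fin k) × Fin (ℓ i)) = ∑ i, ℓ i := by simp
  have : Nonempty ((i : Fin k) × Fin (ℓ i)) := Fintype.card_pos_iff.1 (hcard ▸ hV)
  rw [sum_div_smul_inv_smul_sum]
  refine ENNReal.toReal_le_of_le_ofReal (by unfold hfun; positivity) ?_
  have hLP := levyProkhorovEDist_empirical_subfamily_le w he
  rw [hcard, Fintype.card_fin] at hLP
  exact hLP.trans (ENNReal.ofReal_le_ofReal (one_sub_le_two_mul_hfun _))

/-- Let `w` be a word of length `T` in `ℝ^d` and `v^1, …, v^k`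
non-overlapping subwords of `w` (given by injections with pairwise disjoint ranges) of
total length `|v̲| ≥ 1`. Then
`d_LP(L[w], ∑_i (|v^i|/|v̲|) L[v^i]) ≤ 2 · h(|v̲|/T)` where `h(x) = |1/x − 1| + |1 − x|`. -/
theorem stmt8 {d T k : ℕ} (hT : 1 ≤ T) (w : Fin T → EuclideanSpace ℝ (Fin d))
    (ℓ : Fin k → ℕ) (ι : (i : Fin k) → Fin (ℓ i) → Fin T)
    (hinj : ∀ i, Function.Injective (ι i))
    (hdisj : ∀ i i', i ≠ i' → ∀ a a', ι i a ≠ ι i' a')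
    (hV : 1 ≤ ∑ i, ℓ i) :
    levyProkhorovDist ((T : ℝ≥0∞)⁻¹ • ∑ i, Measure.dirac (w i))
        (∑ i, ((ℓ i : ℝ≥0∞) / ((∑ i', ℓ i' : ℕ) : ℝ≥0∞)) •
          ((ℓ i : ℝ≥0∞)⁻¹ • ∑ a, Measure.dirac (w (ι i a))))
      ≤ 2 * hfun (((∑ i', ℓ i' : ℕ) : ℝ) / (T : ℝ)) :=
  stmt8_general w ℓ ι hinj hdisj hV
end

section
/- Let μ_i, ν_i ∈ P(ℝ^d) for 1 ≤ i ≤ N with Lévy–Prokhorov distances d_LP(μ_i, ν_i) < δ, and let λ_i, γ_i ≥ 0 with Σλ_i = Σγ_i = 1. Then d_LP(Σ λ_i μ_i, Σ γ_i ν_i) ≤ δ + Σ_{i=1}^N |λ_i − γ_i|. -/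
open MeasureTheory
open scoped ENNReal

/-- If `μ_i, ν_i ∈ P(ℝ^d)` satisfy `d_LP(μ_i, ν_i) < δ` for `1 ≤ i ≤ N`,
and `λ_i, γ_i ≥ 0` with `∑ λ_i = ∑ γ_i = 1`, then
`d_LP(∑ λ_i μ_i, ∑ γ_i ν_i) ≤ δ + ∑ |λ_i − γ_i|`. -/
theorem stmt9 {d N : ℕ}
    (μ ν : Fin N → Measure (EuclideanSpace ℝ (Fin d)))
    (hμ : ∀ i, IsProbabilityMeasure (μ i)) (hν : ∀ i, IsProbabilityMeasure (ν i))
    (δ : ℝ) (hδ : 0 < δ) (hclose : ∀ i, levyProkhorovDist (μ i) (ν i) < δ)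
    (lam gam : Fin N → ℝ) (hlam : ∀ i, 0 ≤ lam i) (hgam : ∀ i, 0 ≤ gam i)
    (hlam1 : ∑ i, lam i = 1) (hgam1 : ∑ i, gam i = 1) :
    levyProkhorovDist (∑ i, ENNReal.ofReal (lam i) • μ i)
        (∑ i, ENNReal.ofReal (gam i) • ν i)
      ≤ δ + ∑ i, |lam i - gam i| := by
  have hS0 : 0 ≤ ∑ i, |lam i - gam i| := Finset.sum_nonneg fun i _ => abs_nonneg _
  have hlamsum : ∑ i, ENNReal.ofReal (lam i) = 1 := by
    rw [← ENNReal.ofReal_sum_of_nonneg (fun i _ => hlam i), hlam1, ENNReal.ofReal_one]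
  have hgamsum : ∑ i, ENNReal.ofReal (gam i) = 1 := by
    rw [← ENNReal.ofReal_sum_of_nonneg (fun i _ => hgam i), hgam1, ENNReal.ofReal_one]
  have hmixμ : IsProbabilityMeasure (∑ i, ENNReal.ofReal (lam i) • μ i) := by
    constructor
    simp only [Measure.finset_sum_apply, Measure.smul_apply, smul_eq_mul,
      (hμ _).measure_univ, mul_one]
    exact hlamsum
  have hmixν : IsProbabilityMeasure (∑ i, ENNReal.ofReal (gam i) • ν i) := by
    constructor
    simp only [Measure.finset_sum_apply, Measure.smul_apply, smul_eq_mul,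
      (hν _).measure_univ, mul_one]
    exact hgamsum
  apply levyProkhorovDist_le_of_forall_le _ _ (by positivity)
  intro ε B hε hB
  have hδε : δ ≤ ε := by linarith
  -- individual bound
  have hed : ∀ i, (μ i) B ≤ (ν i) (Metric.thickening δ B) + ENNReal.ofReal δ := by
    intro i
    have := hμ i; have := hν i
    have h1 : levyProkhorovEDist (μ i) (ν i) < ENNReal.ofReal δ := by
      rw [ENNReal.lt_ofReal_iff_toReal_lt (levyProkhorovEDist_ne_top _ _)]
      exact hclose i
    have h2 := left_measure_le_of_levyProkhorovEDist_lt h1 hB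
    rwa [ENNReal.toReal_ofReal hδ.le] at h2
  have hthick : Metric.thickening δ B ⊆ Metric.thickening ε B :=
    Metric.thickening_mono hδε B
  calc (∑ i, ENNReal.ofReal (lam i) • μ i) B
      = ∑ i, ENNReal.ofReal (lam i) * (μ i) B := by
        simp [Measure.finset_sum_apply, Measure.smul_apply, smul_eq_mul]
    _ ≤ ∑ i, ENNReal.ofReal (lam i) * ((ν i) (Metric.thickening δ B) + ENNReal.ofReal δ) :=
        Finset.sum_le_sum fun i _ => mul_le_mul_right (hed i) _
    _ = ∑ i, ENNReal.ofReal (lam i) * (ν i) (Metric.thickening δ B) + ENNReal.ofReal δ := by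
        simp only [mul_add, Finset.sum_add_distrib, ← Finset.sum_mul, hlamsum, one_mul]
    _ ≤ ∑ i, (ENNReal.ofReal (gam i) * (ν i) (Metric.thickening δ B)
          + ENNReal.ofReal |lam i - gam i|) + ENNReal.ofReal δ := by
        gcongr with i _
        have hbd : (ν i) (Metric.thickening δ B) ≤ 1 := by
          have := hν i; exact prob_le_one
        calc ENNReal.ofReal (lam i) * (ν i) (Metric.thickening δ B)
            ≤ (ENNReal.ofReal (gam i) + ENNReal.ofReal |lam i - gam i|)
                * (ν i) (Metric.thickening δ B) := by
              apply mul_le_mul_left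
              rw [← ENNReal.ofReal_add (hgam i) (abs_nonneg _)]
              exact ENNReal.ofReal_le_ofReal (by
                have := le_abs_self (lam i - gam i); linarith)
          _ = ENNReal.ofReal (gam i) * (ν i) (Metric.thickening δ B)
                + ENNReal.ofReal |lam i - gam i| * (ν i) (Metric.thickening δ B) := by
              rw [add_mul]
          _ ≤ ENNReal.ofReal (gam i) * (ν i) (Metric.thickening δ B)
                + ENNReal.ofReal |lam i - gam i| := by
              gcongr
              exact (mul_le_mul_right hbd _).trans (by rw [mul_one])
    _ = ∑ i, ENNReal.ofReal (gam i) * (ν i) (Metric.thickening δ B)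
          + (ENNReal.ofReal (∑ i, |lam i - gam i|) + ENNReal.ofReal δ) := by
        rw [Finset.sum_add_distrib, ENNReal.ofReal_sum_of_nonneg (fun i _ => abs_nonneg _),
          add_assoc]
    _ ≤ (∑ i, ENNReal.ofReal (gam i) • ν i) (Metric.thickening ε B) + ENNReal.ofReal ε := by
        gcongr
        · simp only [Measure.finset_sum_apply, Measure.smul_apply, smul_eq_mul]
          exact Finset.sum_le_sum fun i _ => mul_le_mul_right (measure_mono hthick) _
        · rw [← ENNReal.ofReal_add hS0 hδ.le]
          exact ENNReal.ofReal_le_ofReal (by linarith)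
end

section
/- Let p be a stochastic kernel on ℝ^d such that p(x,·) is absolutely continuous with respect to Lebesgue measure for every x ∈ ℝ^d. Then p admits a jointly measurable density: there exists a Borel-measurable f : ℝ^d × ℝ^d → [0,∞) such that p(x,A) = ∫_A f(x,y) dy for every x and every Borel set A. -/
open MeasureTheory ProbabilityTheory
open scoped ENNReal

/-! Mathlib's Radon–Nikodym derivative of one finite kernel with respect to another is jointly
measurable. Lebesgue measure is not finite, so replace it by an equivalent finite measure
`ν = g • volume` and differentiate `p` against the constant kernel `ν`; then
`g y * (dp(x, ·)/dν) y` is a jointly measurable density with respect to Lebesgue measure. -/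

section

variable {α γ : Type*} [MeasurableSpace α] [MeasurableSpace γ]

theorem MeasureTheory.Measure.withDensity_ofReal_toReal {μ : Measure γ} {f : γ → ℝ≥0∞}
    (hf : Measurable f) (hfin : ∫⁻ y, f y ∂μ ≠ ∞) :
    μ.withDensity (fun y ↦ ENNReal.ofReal (f y).toReal) = μ.withDensity f :=
  withDensity_congr_ae (ofReal_toReal_ae_eq (ae_lt_top hf hfin))

variable [MeasurableSpace.CountableOrCountablyGenerated α γ]

theorem ProbabilityTheory.Kernel.exists_measurable_density_of_absolutelyContinuous
    (κ : Kernel α γ) [IsFiniteKernel κ] (μ : Measure γ) [SigmaFinite μ] (hκμ : ∀ a, κ a ≪ μ) :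
    ∃ f : α → γ → ℝ≥0∞, Measurable (Function.uncurry f) ∧ ∀ a, μ.withDensity (f a) = κ a := by
  obtain ⟨ν, _, hμν, hνμ⟩ := exists_isFiniteMeasure_absolutelyContinuous μ
  have hν : μ.withDensity (ν.rnDeriv μ) = ν := Measure.withDensity_rnDeriv_eq ν μ hνμ
  refine ⟨fun a y ↦ ν.rnDeriv μ y * κ.rnDeriv (Kernel.const α ν) a y,
    (Measure.measurable_rnDeriv ν μ).comp measurable_snd |>.mul (κ.measurable_rnDeriv _),
    fun a ↦ ?_⟩
  have hκν : κ a ≪ Kernel.const α ν a := (hκμ a).trans hμν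
  calc μ.withDensity (ν.rnDeriv μ * κ.rnDeriv (Kernel.const α ν) a)
      = ν.withDensity (κ.rnDeriv (Kernel.const α ν) a) := by
        rw [MeasureTheory.withDensity_mul μ (Measure.measurable_rnDeriv ν μ)
          (κ.measurable_rnDeriv_right _ a), hν]
    _ = κ a := by
        rw [← Kernel.withDensity_rnDeriv_eq hκν, Kernel.withDensity_apply _
          (κ.measurable_rnDeriv _), Kernel.const_apply]

theorem ProbabilityTheory.Kernel.exists_measurable_real_density_of_absolutelyContinuous
    (κ : Kernel α γ) [IsFiniteKernel κ] (μ : Measure γ) [SigmaFinite μ] (hκμ : ∀ a, κ a ≪ μ) :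
    ∃ f : α → γ → ℝ, Measurable (Function.uncurry f) ∧ (∀ a y, 0 ≤ f a y) ∧
      ∀ a, μ.withDensity (fun y ↦ ENNReal.ofReal (f a y)) = κ a := by
  obtain ⟨f, hf, hfκ⟩ := κ.exists_measurable_density_of_absolutelyContinuous μ hκμ
  refine ⟨fun a y ↦ (f a y).toReal, hf.ennreal_toReal, fun _ _ ↦ ENNReal.toReal_nonneg,
    fun a ↦ ?_⟩
  have hfin : ∫⁻ y, f a y ∂μ ≠ ∞ := by
    rw [← setLIntegral_univ, ← withDensity_apply _ MeasurableSet.univ, hfκ a]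
    exact measure_ne_top _ _
  exact (Measure.withDensity_ofReal_toReal (hf.comp measurable_prodMk_left) hfin).trans (hfκ a)

end

/-- Let `p` be a stochastic kernel on `ℝ^d` such that `p(x,·) ≪ Leb` for
every `x`. Then `p` admits a jointly measurable density: there is a Borel-measurable
`f : ℝ^d × ℝ^d → [0,∞)` with `p(x, A) = ∫_A f(x,y) dy` for every `x` and Borel `A`. -/
theorem stmt11 {d : ℕ}
    (p : EuclideanSpace ℝ (Fin d) → Measure (EuclideanSpace ℝ (Fin d)))
    (hp : ∀ x, IsProbabilityMeasure (p x)) (hpmeas : Measurable p)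
    (hac : ∀ x, p x ≪ volume) :
    ∃ f : EuclideanSpace ℝ (Fin d) → EuclideanSpace ℝ (Fin d) → ℝ,
      Measurable (Function.uncurry f) ∧ (∀ x y, 0 ≤ f x y) ∧
      ∀ x, ∀ A : Set (EuclideanSpace ℝ (Fin d)), MeasurableSet A →
        p x A = ∫⁻ y in A, ENNReal.ofReal (f x y) := by
  let κ : Kernel (EuclideanSpace ℝ (Fin d)) (EuclideanSpace ℝ (Fin d)) := ⟨p, hpmeas⟩
  have : IsMarkovKernel κ := ⟨hp⟩
  obtain ⟨f, hf, hf_nonneg, hfκ⟩ :=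
    κ.exists_measurable_real_density_of_absolutelyContinuous volume hac
  refine ⟨f, hf, hf_nonneg, fun x A hA ↦ ?_⟩
  rw [← withDensity_apply _ hA, hfκ x]
  rfl
end

section
/- Let (X_n) be a Markov chain on ℝ that is almost surely strictly increasing, whose transition kernel admits a density ρ(x,·) bounded by 1/a uniformly in x, for some a > 0. Then for U = (x₀, x₀ + a) and any κ > 0, limsup_{n→∞} (1/n) log P(L_n(U) ≥ κ) = −∞, where L_n = (1/n)Σ_{i=1}^n δ_{X_i}. -/
/-!
On the almost sure event that the chain increases, `k + 1` visits to `U = (x₀, x₀ + a)` before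
time `n` produce a window `X_i < X_{i+1} < ⋯ < X_{i+k}` with `i < n` and `X_{i+k} < X_i + a`.
Integrating the path density out one coordinate at a time, each transition density contributing
a factor at most `1/a`, bounds the probability of such a window by `a⁻ᵏ` times the volume `aᵏ/k!`
of a simplex of side `a`. A union bound over `i` gives `P(L_n(U) ≥ κ) ≤ n / (⌈κn⌉ - 1)!`, which
decays faster than any exponential.
-/

open MeasureTheory Filter
open scoped ENNReal ProbabilityTheory

/-- The density of the first `n+1` states of a Markov chain with initial density `g` and
transition density `ρ`: `g(u₀) ∏_{i<n} ρ(uᵢ, u_{i+1})`. -/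
noncomputable def pathDensity (g : ℝ → ℝ≥0∞) (ρ : ℝ → ℝ → ℝ≥0∞) (n : ℕ)
    (u : Fin (n + 1) → ℝ) : ℝ≥0∞ :=
  g (u 0) * ∏ i : Fin n, ρ (u i.castSucc) (u i.succ)

open scoped Nat
open Finset

lemma lintegral_prod_symm_le {α β : Type*} [MeasurableSpace α] [MeasurableSpace β]
    (μ : Measure α) (ν : Measure β) [SFinite μ] [SFinite ν] (f : α × β → ℝ≥0∞) :
    ∫⁻ z, f z ∂(μ.prod ν) ≤ ∫⁻ y, ∫⁻ x, f (x, y) ∂μ ∂ν := by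
  obtain ⟨h, hmeas, hle, heq⟩ := exists_measurable_le_lintegral_eq (μ.prod ν) f
  rw [heq, lintegral_prod_symm _ hmeas.aemeasurable]
  exact lintegral_mono fun y => lintegral_mono fun x => hle _

lemma lintegral_le_lintegral_lintegral_snoc {α : Type*} [MeasureSpace α]
    [SigmaFinite (volume : Measure α)] {n : ℕ} (f : (Fin (n + 1) → α) → ℝ≥0∞) :
    ∫⁻ u, f u ≤ ∫⁻ x : Fin n → α, ∫⁻ y : α, f (Fin.snoc x y) := by
  have e := (volume_preserving_piFinSuccAbove (fun _ : Fin (n + 1) => α) (Fin.last n)).symm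
  rw [← e.map_eq, lintegral_map_equiv, Measure.volume_eq_prod]
  refine (lintegral_prod_symm_le _ _ _).trans_eq ?_
  simp [MeasurableEquiv.piFinSuccAbove_symm_apply, Fin.insertNthEquiv, Fin.insertNth_last']

lemma Fin.strictMono_snoc {α : Type*} [Preorder α] {n : ℕ} {x : Fin (n + 1) → α} {y : α} :
    StrictMono (Fin.snoc x y : Fin (n + 2) → α) ↔ StrictMono x ∧ x (Fin.last n) < y := by
  rw [Fin.strictMono_iff_lt_succ, Fin.strictMono_iff_lt_succ, Fin.forall_fin_succ']
  simp [Fin.succ_castSucc, -Fin.castSucc_succ]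

lemma Monotone.exists_lt_add_of_lt_card_filter_Ioo {f : ℕ → ℝ} (hf : Monotone f) {n k : ℕ}
    {b a : ℝ} (hk : k < #{i ∈ range n | f i ∈ Set.Ioo b (b + a)}) :
    ∃ i < n, f (i + k) < f i + a := by
  set F := {i ∈ range n | f i ∈ Set.Ioo b (b + a)}
  have hF : F.Nonempty := card_pos.1 (by omega)
  obtain ⟨hi₀n, hi₀⟩ := mem_filter.1 (F.min'_mem hF)
  refine ⟨F.min' hF, mem_range.1 hi₀n, ?_⟩
  by_contra! hgap
  have hsub : F ⊆ Ico (F.min' hF) (F.min' hF + k) := fun j hj => by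
    refine mem_Ico.2 ⟨F.min'_le j hj, not_le.1 fun hjk => ?_⟩
    linarith [hf hjk, hi₀.1, (mem_filter.1 hj).2.2]
  simpa using card_le_card hsub |>.trans_lt' hk

/-- `a⁻ᵐ` times the volume `(s + a - t)ᵐ / m!` of the simplex `{t < y₁ < ⋯ < yₘ < s + a}`. -/
noncomputable def simplexWeight (a : ℝ) (m : ℕ) (s t : ℝ) : ℝ≥0∞ :=
  (Set.Iio (s + a)).indicator (fun t => ENNReal.ofReal ((s + a - t) ^ m / (a ^ m * m !))) t

section SimplexWeight

variable {a : ℝ} (m : ℕ) (s : ℝ)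

lemma simplexWeight_self (ha : 0 < a) : simplexWeight a m s s = (m ! : ℝ≥0∞)⁻¹ := by
  rw [simplexWeight, Set.indicator_of_mem (by simpa using ha), add_sub_cancel_left,
    div_mul_cancel_left₀ (pow_ne_zero m ha.ne'), ENNReal.ofReal_inv_of_pos (by positivity),
    ENNReal.ofReal_natCast]

lemma measurable_simplexWeight : Measurable (simplexWeight a m s) :=
  (by fun_prop : Measurable fun t => ENNReal.ofReal ((s + a - t) ^ m / (a ^ m * m !))).indicator
    measurableSet_Iio

lemma setLIntegral_Ioi_simplexWeight (ha : 0 < a) (t : ℝ) :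
    ∫⁻ y in Set.Ioi t, simplexWeight a m s y = ENNReal.ofReal a * simplexWeight a (m + 1) s t := by
  unfold simplexWeight
  rw [setLIntegral_indicator measurableSet_Iio, Set.Iio_inter_Ioi]
  by_cases hts : t < s + a
  · rw [Set.indicator_of_mem (Set.mem_Iio.2 hts), ← ofReal_integral_eq_lintegral_ofReal,
      ← ENNReal.ofReal_mul ha.le]
    · rw [← integral_Ioc_eq_integral_Ioo, ← intervalIntegral.integral_of_le hts.le,
        intervalIntegral.integral_div, intervalIntegral.integral_comp_sub_left (fun u => u ^ m),
        sub_self, integral_pow]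
      congr 1
      push_cast [Nat.factorial_succ]
      field_simp
      ring
    · exact (Continuous.integrableOn_Icc (by fun_prop)).mono_set Set.Ioo_subset_Icc_self
    · filter_upwards [ae_restrict_mem measurableSet_Ioo] with y hy
      have : 0 ≤ s + a - y := by linarith [hy.2]
      positivity
  · rw [Set.indicator_of_notMem (mt Set.mem_Iio.1 hts), Set.Ioo_eq_empty hts,
      Measure.restrict_empty, lintegral_zero_measure, mul_zero]

lemma lintegral_mul_indicator_mul_simplexWeight_le (ha : 0 < a) {r : ℝ → ℝ≥0∞}
    (hr : ∀ y, r y ≤ ENNReal.ofReal (1 / a)) (c : ℝ≥0∞) (t : ℝ) :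
    ∫⁻ y, c * ((Set.Ioi t).indicator r y * simplexWeight a m s y)
      ≤ c * simplexWeight a (m + 1) s t := by
  calc ∫⁻ y, c * ((Set.Ioi t).indicator r y * simplexWeight a m s y)
      ≤ ∫⁻ y, c * (ENNReal.ofReal (1 / a) * (Set.Ioi t).indicator (simplexWeight a m s) y) := by
        refine lintegral_mono fun y => ?_
        gcongr c * ?_
        by_cases hy : y ∈ Set.Ioi t
        · simp only [Set.indicator_of_mem hy]
          gcongr
          exact hr y
        · simp [Set.indicator_of_notMem hy]
    _ = c * (ENNReal.ofReal (1 / a) * ∫⁻ y in Set.Ioi t, simplexWeight a m s y) := by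
        have hmeas := (measurable_simplexWeight (a := a) m s).indicator (measurableSet_Ioi (a := t))
        rw [lintegral_const_mul _ (hmeas.const_mul _), lintegral_const_mul _ hmeas,
          lintegral_indicator measurableSet_Ioi]
    _ = c * simplexWeight a (m + 1) s t := by
        rw [setLIntegral_Ioi_simplexWeight m s ha, ← mul_assoc (ENNReal.ofReal (1 / a)),
          ← ENNReal.ofReal_mul (by positivity),
          one_div_mul_cancel ha.ne', ENNReal.ofReal_one, one_mul]

end SimplexWeight

noncomputable def increasingPathDensity (g : ℝ → ℝ≥0∞) (ρ : ℝ → ℝ → ℝ≥0∞) (n : ℕ)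
    (u : Fin (n + 1) → ℝ) : ℝ≥0∞ :=
  {u | StrictMono u}.indicator (pathDensity g ρ n) u

section PathDensity

variable {g : ℝ → ℝ≥0∞} {ρ : ℝ → ℝ → ℝ≥0∞}

lemma pathDensity_snoc {n : ℕ} (x : Fin (n + 1) → ℝ) (y : ℝ) :
    pathDensity g ρ (n + 1) (Fin.snoc x y) = pathDensity g ρ n x * ρ (x (Fin.last n)) y := by
  simp only [pathDensity, Fin.prod_univ_castSucc, Fin.succ_castSucc, Fin.snoc_castSucc,
    Fin.succ_last, Fin.snoc_last, mul_assoc]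
  rfl

lemma increasingPathDensity_snoc {n : ℕ} (x : Fin (n + 1) → ℝ) (y : ℝ) :
    increasingPathDensity g ρ (n + 1) (Fin.snoc x y)
      = increasingPathDensity g ρ n x
        * (Set.Ioi (x (Fin.last n))).indicator (ρ (x (Fin.last n))) y := by
  by_cases hx : StrictMono x <;> by_cases hy : x (Fin.last n) < y <;>
    simp [increasingPathDensity, Set.indicator, Fin.strictMono_snoc, pathDensity_snoc, hx, hy]

variable {a : ℝ}

lemma lintegral_increasingPathDensity_mul_simplexWeight_last_le (ha : 0 < a)
    (hmass : ∀ n, ∫⁻ u, pathDensity g ρ n u ≤ 1) (n m : ℕ) :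
    ∫⁻ u, increasingPathDensity g ρ n u * simplexWeight a m (u (Fin.last n)) (u (Fin.last n))
      ≤ (m ! : ℝ≥0∞)⁻¹ := by
  simp_rw [simplexWeight_self m _ ha]
  rw [lintegral_mul_const' _ _ (ENNReal.inv_ne_top.2 (by simp [Nat.factorial_ne_zero]))]
  calc (∫⁻ u, increasingPathDensity g ρ n u) * (m ! : ℝ≥0∞)⁻¹
      ≤ 1 * (m ! : ℝ≥0∞)⁻¹ := by
        gcongr
        exact (lintegral_mono fun u => Set.indicator_le_self _ _ u).trans (hmass n)
    _ = (m ! : ℝ≥0∞)⁻¹ := one_mul _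

theorem lintegral_increasingPathDensity_mul_simplexWeight_le (ha : 0 < a)
    (hρ : ∀ x y, ρ x y ≤ ENNReal.ofReal (1 / a)) (hmass : ∀ n, ∫⁻ u, pathDensity g ρ n u ≤ 1)
    (n : ℕ) (j : Fin (n + 1)) (m : ℕ) :
    ∫⁻ u, increasingPathDensity g ρ n u * simplexWeight a m (u j) (u (Fin.last n))
      ≤ ((n - j + m)! : ℝ≥0∞)⁻¹ := by
  induction n generalizing m with
  | zero =>
    obtain rfl : j = Fin.last 0 := Subsingleton.elim (α := Fin 1) _ _
    simpa using lintegral_increasingPathDensity_mul_simplexWeight_last_le ha hmass 0 m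
  | succ n ih =>
    cases j using Fin.lastCases with
    | last =>
      simpa using lintegral_increasingPathDensity_mul_simplexWeight_last_le ha hmass (n + 1) m
    | cast j =>
      calc ∫⁻ u, increasingPathDensity g ρ (n + 1) u
            * simplexWeight a m (u j.castSucc) (u (Fin.last (n + 1)))
          ≤ ∫⁻ x, ∫⁻ y, increasingPathDensity g ρ (n + 1) (Fin.snoc x y)
            * simplexWeight a m ((Fin.snoc x y : Fin (n + 2) → ℝ) j.castSucc)
              ((Fin.snoc x y : Fin (n + 2) → ℝ) (Fin.last (n + 1))) :=
            lintegral_le_lintegral_lintegral_snoc _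
        _ = ∫⁻ x, ∫⁻ y, increasingPathDensity g ρ n x
            * ((Set.Ioi (x (Fin.last n))).indicator (ρ (x (Fin.last n))) y
              * simplexWeight a m (x j) y) := by
            simp only [increasingPathDensity_snoc, Fin.snoc_castSucc, Fin.snoc_last, mul_assoc]
        _ ≤ ∫⁻ x, increasingPathDensity g ρ n x * simplexWeight a (m + 1) (x j) (x (Fin.last n)) :=
            lintegral_mono fun x =>
              lintegral_mul_indicator_mul_simplexWeight_le _ _ ha (hρ _) _ _
        _ ≤ ((n - j + (m + 1))! : ℝ≥0∞)⁻¹ := ih j (m + 1)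
        _ = ((n + 1 - j.castSucc + m)! : ℝ≥0∞)⁻¹ := by
            rw [Fin.val_castSucc, show n - j + (m + 1) = n + 1 - j + m by omega]

end PathDensity

section MarkovChain

variable {Ω : Type*} [MeasureSpace Ω] [IsProbabilityMeasure (ℙ : Measure Ω)] {X : ℕ → Ω → ℝ}
  {g : ℝ → ℝ≥0∞} {ρ : ℝ → ℝ → ℝ≥0∞} {a : ℝ}

lemma lintegral_pathDensity_eq_one (hX : ∀ n, Measurable (X n))
    (hlaw : ∀ n : ℕ, Measure.map (fun ω (i : Fin (n + 1)) => X i ω) ℙ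
      = (volume : Measure (Fin (n + 1) → ℝ)).withDensity (pathDensity g ρ n)) (n : ℕ) :
    ∫⁻ u, pathDensity g ρ n u = 1 := by
  have hΦ : Measurable fun ω (i : Fin (n + 1)) => X i ω := measurable_pi_lambda _ fun i => hX i
  have h := congrArg (· Set.univ) (hlaw n)
  rwa [Measure.map_apply hΦ .univ, Set.preimage_univ, measure_univ, withDensity_apply _ .univ,
    Measure.restrict_univ, eq_comm] at h

lemma measurableSet_setOf_strictMono (n : ℕ) :
    MeasurableSet {u : Fin (n + 1) → ℝ | StrictMono u} := by
  simp only [Fin.strictMono_iff_lt_succ, Set.ofPred_forall]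
  exact MeasurableSet.iInter fun i =>
    measurableSet_lt (measurable_pi_apply _) (measurable_pi_apply _)

lemma prob_lt_add_le_inv_factorial (hX : ∀ n, Measurable (X n)) (ha : 0 < a)
    (hρ : ∀ x y, ρ x y ≤ ENNReal.ofReal (1 / a))
    (hlaw : ∀ n : ℕ, Measure.map (fun ω (i : Fin (n + 1)) => X i ω) ℙ
      = (volume : Measure (Fin (n + 1) → ℝ)).withDensity (pathDensity g ρ n))
    (hmono : ∀ᵐ ω ∂ℙ, StrictMono fun n => X n ω) (i k : ℕ) :
    ℙ {ω | X (i + k) ω < X i ω + a} ≤ (k ! : ℝ≥0∞)⁻¹ := by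
  let j : Fin (i + k + 1) := ⟨i, by omega⟩
  let S : Set (Fin (i + k + 1) → ℝ) := {u | StrictMono u ∧ u (Fin.last (i + k)) < u j + a}
  have hS : MeasurableSet S := (measurableSet_setOf_strictMono _).inter
    (measurableSet_lt (measurable_pi_apply _) ((measurable_pi_apply _).add_const _))
  have hΦ : Measurable fun ω (l : Fin (i + k + 1)) => X l ω := measurable_pi_lambda _ fun l => hX l
  have hmass n : ∫⁻ u, pathDensity g ρ n u ≤ 1 := (lintegral_pathDensity_eq_one hX hlaw n).le
  calc ℙ {ω | X (i + k) ω < X i ω + a}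
      ≤ ℙ ((fun ω (l : Fin (i + k + 1)) => X l ω) ⁻¹' S) := by
        refine measure_mono_ae ?_
        filter_upwards [hmono] with ω hω hlt
        exact ⟨hω.comp Fin.val_strictMono, hlt⟩
    _ = ∫⁻ u, S.indicator (pathDensity g ρ (i + k)) u := by
        rw [← Measure.map_apply hΦ hS, hlaw, withDensity_apply _ hS, lintegral_indicator hS]
    _ ≤ ∫⁻ u, increasingPathDensity g ρ (i + k) u
          * simplexWeight a 0 (u j) (u (Fin.last (i + k))) := by
        refine lintegral_mono fun u => ?_
        by_cases hu : u ∈ S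
        · simp [Set.indicator_of_mem hu, increasingPathDensity, simplexWeight,
            Set.indicator_of_mem (s := {u | StrictMono u}) hu.1,
            Set.indicator_of_mem (Set.mem_Iio.2 hu.2)]
        · simp [Set.indicator_of_notMem hu]
    _ ≤ ((i + k - j + 0)! : ℝ≥0∞)⁻¹ :=
        lintegral_increasingPathDensity_mul_simplexWeight_le ha hρ hmass _ j 0
    _ = (k ! : ℝ≥0∞)⁻¹ := by simp [j]

lemma prob_lt_card_visits_le (hX : ∀ n, Measurable (X n)) (ha : 0 < a)
    (hρ : ∀ x y, ρ x y ≤ ENNReal.ofReal (1 / a))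
    (hlaw : ∀ n : ℕ, Measure.map (fun ω (i : Fin (n + 1)) => X i ω) ℙ
      = (volume : Measure (Fin (n + 1) → ℝ)).withDensity (pathDensity g ρ n))
    (hmono : ∀ᵐ ω ∂ℙ, StrictMono fun n => X n ω) (x₀ : ℝ) (n k : ℕ) :
    ℙ {ω | k < #{i ∈ range n | X i ω ∈ Set.Ioo x₀ (x₀ + a)}} ≤ n / (k ! : ℝ≥0∞) := by
  calc ℙ {ω | k < #{i ∈ range n | X i ω ∈ Set.Ioo x₀ (x₀ + a)}}
      ≤ ℙ (⋃ i ∈ range n, {ω | X (i + k) ω < X i ω + a}) := by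
        refine measure_mono_ae ?_
        filter_upwards [hmono] with ω hω hk
        obtain ⟨i, hi, hlt⟩ := hω.monotone.exists_lt_add_of_lt_card_filter_Ioo hk
        exact Set.mem_iUnion₂.2 ⟨i, mem_range.2 hi, hlt⟩
    _ ≤ ∑ i ∈ range n, ℙ {ω | X (i + k) ω < X i ω + a} := measure_biUnion_finset_le _ _
    _ ≤ ∑ i ∈ range n, (k ! : ℝ≥0∞)⁻¹ :=
        sum_le_sum fun i _ => prob_lt_add_le_inv_factorial hX ha hρ hlaw hmono i k
    _ = n / (k ! : ℝ≥0∞) := by simp [div_eq_mul_inv]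

end MarkovChain

lemma limsup_inv_mul_log_eq_bot {p : ℕ → ℝ≥0∞}
    (hp : ∀ R : ℝ, ∀ᶠ n in atTop, p n ≤ ENNReal.ofReal (Real.exp (R * n))) :
    limsup (fun n : ℕ => (((n : ℝ)⁻¹ : ℝ) : EReal) * ENNReal.log (p n)) atTop = ⊥ := by
  refine Tendsto.limsup_eq (EReal.tendsto_nhds_bot_iff_real.2 fun R => ?_)
  filter_upwards [hp (R - 1), eventually_gt_atTop 0] with n hpn hn
  have hlog : ENNReal.log (p n) ≤ (((R - 1) * n : ℝ) : EReal) := by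
    simpa [ENNReal.log_ofReal_of_pos (Real.exp_pos _)] using ENNReal.log_le_log hpn
  calc (((n : ℝ)⁻¹ : ℝ) : EReal) * ENNReal.log (p n)
      ≤ (((n : ℝ)⁻¹ : ℝ) : EReal) * (((R - 1) * n : ℝ) : EReal) :=
        mul_le_mul_of_nonneg_left hlog (EReal.coe_nonneg.2 (by positivity))
    _ = ((R - 1 : ℝ) : EReal) := by rw [← EReal.coe_mul]; field_simp
    _ < R := EReal.coe_lt_coe_iff.2 (by linarith)

lemma eventually_natCast_div_factorial_le_exp {κ : ℝ} (hκ : 0 < κ) (R : ℝ) :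
    ∀ᶠ n : ℕ in atTop, (n : ℝ≥0∞) / (⌈κ * n⌉₊ - 1)! ≤ ENNReal.ofReal (Real.exp (R * n)) := by
  set L := (|R| + 2) / κ
  have hL : 0 ≤ L := by positivity
  filter_upwards [tendsto_natCast_atTop_atTop.eventually_ge_atTop (Real.exp L + L)] with n hn
  set k := ⌈κ * n⌉₊ - 1
  have hk : κ * n ≤ k + 1 :=
    (Nat.le_ceil _).trans (by exact_mod_cast (by omega : ⌈κ * n⌉₊ ≤ k + 1))
  have hfact : Real.exp (k * L - Real.exp L) ≤ k ! := by
    have h := Real.pow_div_factorial_le_exp _ (Real.exp_pos L).le k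
    rw [← Real.exp_nat_mul, div_le_iff₀ (by positivity)] at h
    rwa [Real.exp_sub, div_le_iff₀ (Real.exp_pos _), mul_comm (k ! : ℝ)]
  have hexp : (n : ℝ) + Real.exp L - k * L ≤ R * n := by
    have h1 : (κ * n - 1) * L ≤ k * L := mul_le_mul_of_nonneg_right (by linarith) hL
    have h2 : κ * L = |R| + 2 := mul_div_cancel₀ _ hκ.ne'
    have h3 : -|R| * n ≤ R * n := mul_le_mul_of_nonneg_right (neg_abs_le R) n.cast_nonneg
    nlinarith
  rw [← ENNReal.ofReal_natCast, ← ENNReal.ofReal_natCast (k !),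
    ← ENNReal.ofReal_div_of_pos (by positivity)]
  refine ENNReal.ofReal_le_ofReal ((div_le_iff₀ (by positivity)).2 ?_)
  calc (n : ℝ) ≤ Real.exp n := by linarith [Real.add_one_le_exp n]
    _ ≤ Real.exp (R * n + (k * L - Real.exp L)) := Real.exp_le_exp.2 (by linarith)
    _ = Real.exp (R * n) * Real.exp (k * L - Real.exp L) := Real.exp_add _ _
    _ ≤ Real.exp (R * n) * k ! := by gcongr

/-- Let `(X_n)` be a Markov chain on `ℝ` that is a.s. strictly
increasing, whose transition kernel has a density `ρ(x, ·)` bounded by `1/a` uniformly in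
`x`, for some `a > 0`. Then for `U = (x₀, x₀ + a)` and any `κ > 0`,
`limsup_n (1/n) log P(L_n(U) ≥ κ) = −∞`, where `L_n` is the empirical measure of the first
`n` states. -/
theorem stmt13 {Ω : Type*} [MeasureSpace Ω] [IsProbabilityMeasure (ℙ : Measure Ω)]
    (X : ℕ → Ω → ℝ) (hXmeas : ∀ n, Measurable (X n))
    (g : ℝ → ℝ≥0∞) (ρ : ℝ → ℝ → ℝ≥0∞)
    (a : ℝ) (ha : 0 < a)
    (hρbdd : ∀ x y, ρ x y ≤ ENNReal.ofReal (1 / a))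
    (hlaw : ∀ n : ℕ, Measure.map (fun ω (i : Fin (n + 1)) => X i ω) ℙ
      = (volume : Measure (Fin (n + 1) → ℝ)).withDensity (pathDensity g ρ n))
    (hmono : ∀ᵐ ω ∂ℙ, StrictMono fun n => X n ω)
    (x₀ κ : ℝ) (hκ : 0 < κ) :
    Filter.limsup
      (fun n : ℕ => (((n : ℝ)⁻¹ : ℝ) : EReal) *
        ENNReal.log (ℙ {ω | κ ≤ (n : ℝ)⁻¹ *
          ((Finset.range n).filter fun i => X i ω ∈ Set.Ioo x₀ (x₀ + a)).card}))
      Filter.atTop = ⊥ := by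
  refine limsup_inv_mul_log_eq_bot fun R => ?_
  filter_upwards [eventually_gt_atTop 0, eventually_natCast_div_factorial_le_exp hκ R]
    with n hn hdecay
  have hvisits : ∀ c : ℕ, κ ≤ (n : ℝ)⁻¹ * c → ⌈κ * n⌉₊ - 1 < c := fun c hc => by
    have hpos : 0 < ⌈κ * n⌉₊ := Nat.ceil_pos.2 (by positivity)
    have hle : ⌈κ * n⌉₊ ≤ c :=
      Nat.ceil_le.2 (by rwa [le_inv_mul_iff₀ (by positivity), mul_comm] at hc)
    omega
  calc ℙ {ω | κ ≤ (n : ℝ)⁻¹ * #{i ∈ range n | X i ω ∈ Set.Ioo x₀ (x₀ + a)}}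
      ≤ ℙ {ω | ⌈κ * n⌉₊ - 1 < #{i ∈ range n | X i ω ∈ Set.Ioo x₀ (x₀ + a)}} :=
        measure_mono fun ω => hvisits _
    _ ≤ n / ((⌈κ * n⌉₊ - 1)! : ℝ≥0∞) :=
        prob_lt_card_visits_le hXmeas ha hρbdd hlaw hmono x₀ n _
    _ ≤ ENNReal.ofReal (Real.exp (R * n)) := hdecay
end

section
/- Let f : ℝ → ℝ be continuous nondecreasing, φ a lower semicontinuous bounded probability density with support exactly [−1,1] (positivity set (−1,1)), and consider the Markov chain with kernel density ρ(x,y) = φ(y − f(x)). Let B = {x ∈ ℝ : f(x) − x ∈ (−1,1)}. Then the communicating classes of the chain (maximal sets on which the resolvent density ρ̃ = Σ 2^{-k}ρ^k is everywhere positive) are exactly the connected components of B. -/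
open MeasureTheory
open scoped ENNReal

/-!
Write `ρ` for the kernel and `B = {x | f x - x ∈ (-1, 1)}`; on `B` the diagonal
`ρ(x, x) = φ(x - f x)` is positive.

Within a component `U` of `B`: since `(x, y) ↦ ρ(x, y)` is lower semicontinuous, if the
`k`-step density from `u` is bounded below near `z` and `ρ(z, y) > 0`, then the `(k+1)`-step
density is bounded below near `y`. So the set `R` of points reached in this uniform sense is
open, and a point of `U \ R` has a neighbourhood outside `R` (it is reached from all nearby
points, as `ρ(y, y) > 0`). Connectedness of `U` and `u ∈ R` give `U ⊆ R`.

Between components: a point `a ∉ B` is a ratchet. If `f a ≥ a + 1`, monotonicity of `f` and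
`{φ > 0} ⊆ (-1, 1)` trap the chain started in `[a, ∞)` inside `(a, ∞)`; symmetrically if
`f a ≤ a - 1`. So two points with `ρ̃ > 0` in both directions span an interval inside `B`.
-/

/-- Iterated transition densities on `ℝ` (ℝ≥0∞-valued): `iterK ρ 1 = ρ` and
`iterK ρ (k+1) x y = ∫ z, iterK ρ k x z · ρ(z, y) dz`; `iterK ρ 0` is junk. -/
noncomputable def iterK (ρ : ℝ → ℝ → ℝ≥0∞) : ℕ → ℝ → ℝ → ℝ≥0∞
  | 0 => fun _ _ => 0
  | 1 => ρ
  | (k + 2) => fun x y => ∫⁻ z, iterK ρ (k + 1) x z * ρ z y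

/-- The resolvent density `ρ̃(x,y) = ∑_{k ≥ 1} 2^{-k} ρ^k(x,y)`. -/
noncomputable def resolventK (ρ : ℝ → ℝ → ℝ≥0∞) (x y : ℝ) : ℝ≥0∞ :=
  ∑' k : ℕ, ((2 : ℝ≥0∞)⁻¹) ^ (k + 1) * iterK ρ (k + 1) x y

/-- A communicating class: a nonempty maximal set on which the resolvent density is
everywhere positive. -/
def IsCommClassR (ρ : ℝ → ℝ → ℝ≥0∞) (A : Set ℝ) : Prop :=
  A.Nonempty ∧ (∀ x ∈ A, ∀ y ∈ A, 0 < resolventK ρ x y) ∧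
    ∀ B, A ⊆ B → (∀ x ∈ B, ∀ y ∈ B, 0 < resolventK ρ x y) → B = A

open Set Filter Topology

section Kernel

variable {ρ : ℝ → ℝ → ℝ≥0∞}

theorem resolventK_pos_iff {x y : ℝ} :
    0 < resolventK ρ x y ↔ ∃ k, 0 < iterK ρ (k + 1) x y := by
  simp only [pos_iff_ne_zero, resolventK, ne_eq, ENNReal.tsum_eq_zero, mul_eq_zero,
    pow_eq_zero_iff', ENNReal.inv_eq_zero, ENNReal.ofNat_ne_top, false_and, false_or, not_forall]

theorem iterK_eq_zero_of_trap {S T : Set ℝ} (hTS : T ⊆ S)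
    (hρ : ∀ z ∈ S, ∀ y ∉ T, ρ z y = 0) :
    ∀ k : ℕ, ∀ z ∈ S, ∀ y ∉ T, iterK ρ (k + 1) z y = 0
  | 0, z, hz, y, hy => hρ z hz y hy
  | k + 1, z, hz, y, hy => by
    refine (lintegral_congr fun w => ?_).trans lintegral_zero
    by_cases hw : w ∈ T
    · rw [hρ w (hTS hw) y hy, mul_zero]
    · rw [iterK_eq_zero_of_trap hTS hρ k z hz w hw, zero_mul]

theorem resolventK_eq_zero_of_trap {S T : Set ℝ} (hTS : T ⊆ S)
    (hρ : ∀ z ∈ S, ∀ y ∉ T, ρ z y = 0) {z y : ℝ} (hz : z ∈ S) (hy : y ∉ T) :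
    resolventK ρ z y = 0 := by
  by_contra h
  obtain ⟨k, hk⟩ := resolventK_pos_iff.1 (pos_iff_ne_zero.2 h)
  exact hk.ne' (iterK_eq_zero_of_trap hTS hρ k z hz y hy)

/-- Pointwise positivity of `iterK` would not survive the next integration, hence the lower
bound on a whole neighbourhood of `y`. -/
def reachSet (ρ : ℝ → ℝ → ℝ≥0∞) (u : ℝ) : Set ℝ :=
  {y | ∃ k, ∃ c : ℝ≥0∞, 0 < c ∧ ∀ᶠ y' in 𝓝 y, c ≤ iterK ρ (k + 1) u y'}

theorem isOpen_reachSet (u : ℝ) : IsOpen (reachSet ρ u) :=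
  isOpen_iff_mem_nhds.2 fun _ ⟨k, c, hc, hy⟩ =>
    hy.eventually_nhds.mono fun _ hy' => ⟨k, c, hc, hy'⟩

theorem resolventK_pos_of_mem_reachSet {u y : ℝ} (hy : y ∈ reachSet ρ u) :
    0 < resolventK ρ u y :=
  let ⟨k, _, hc, hk⟩ := hy
  resolventK_pos_iff.2 ⟨k, hc.trans_le hk.self_of_nhds⟩


theorem exists_pos_eventually_prod_lt (hρ : LowerSemicontinuous (Function.uncurry ρ))
    {z y : ℝ} (h : 0 < ρ z y) :
    ∃ c, 0 < c ∧ ∀ᶠ p in 𝓝 z ×ˢ 𝓝 y, c < ρ p.1 p.2 := by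
  obtain ⟨c, hc, hcρ⟩ := exists_between h
  exact ⟨c, hc, nhds_prod_eq (x := z) (y := y) ▸ hρ (z, y) c hcρ⟩

theorem mem_reachSet_of_pos (hρ : LowerSemicontinuous (Function.uncurry ρ))
    {u y : ℝ} (h : 0 < ρ u y) : y ∈ reachSet ρ u := by
  obtain ⟨c, hc, hρc⟩ := exists_pos_eventually_prod_lt hρ h
  exact ⟨0, c, hc, (hρc.curry.self_of_nhds).mono fun _ h => h.le⟩

theorem mem_reachSet_of_mem_of_pos (hρ : LowerSemicontinuous (Function.uncurry ρ))
    {u z y : ℝ} (hz : z ∈ reachSet ρ u) (h : 0 < ρ z y) :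
    y ∈ reachSet ρ u := by
  obtain ⟨k, c, hc, hk⟩ := hz
  obtain ⟨c', hc', hρc'⟩ := exists_pos_eventually_prod_lt hρ h
  obtain ⟨pz, hpz, py, hpy, hρp⟩ := eventually_prod_iff.1 hρc'
  obtain ⟨W, hW, hWo, hzW⟩ := mem_nhds_iff.1 (hk.and hpz)
  refine ⟨k + 1, c * c' * volume W, ?_, hpy.mono fun y' hy' => ?_⟩
  · exact ENNReal.mul_pos (ENNReal.mul_pos hc.ne' hc'.ne').ne'
      (hWo.measure_pos volume ⟨z, hzW⟩).ne'
  calc c * c' * volume W = ∫⁻ _ in W, c * c' := (setLIntegral_const W _).symm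
    _ ≤ ∫⁻ w in W, iterK ρ (k + 1) u w * ρ w y' :=
        setLIntegral_mono' hWo.measurableSet fun w hw =>
          mul_le_mul' (hW hw).1 (hρp (hW hw).2 hy').le
    _ ≤ iterK ρ (k + 2) u y' := setLIntegral_le_lintegral _ _

theorem subset_reachSet_of_isPreconnected (hρ : LowerSemicontinuous (Function.uncurry ρ))
    {U : Set ℝ} (hU : IsPreconnected U)
    (hdiag : ∀ y ∈ U, 0 < ρ y y) {u : ℝ} (hu : u ∈ U) : U ⊆ reachSet ρ u := by
  refine hU.subset_left_of_subset_union (isOpen_reachSet u) isOpen_interior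
    (disjoint_compl_right.mono_right interior_subset) (fun y hy => ?_)
    ⟨u, hu, mem_reachSet_of_pos hρ (hdiag u hu)⟩
  by_cases hyR : y ∈ reachSet ρ u
  · exact Or.inl hyR
  obtain ⟨c, hc, hρc⟩ := exists_pos_eventually_prod_lt hρ (hdiag y hy)
  refine Or.inr (mem_interior_iff_mem_nhds.2 ?_)
  filter_upwards [(hρc.curry).mono fun _ h => h.self_of_nhds] with y' hy' hy'R
  exact hyR (mem_reachSet_of_mem_of_pos hρ hy'R (hc.trans hy'))

theorem resolventK_pos_of_isPreconnected (hρ : LowerSemicontinuous (Function.uncurry ρ))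
    {U : Set ℝ} (hU : IsPreconnected U)
    (hdiag : ∀ y ∈ U, 0 < ρ y y) {u v : ℝ} (hu : u ∈ U) (hv : v ∈ U) :
    0 < resolventK ρ u v :=
  resolventK_pos_of_mem_reachSet (subset_reachSet_of_isPreconnected hρ hU hdiag hu hv)

end Kernel

theorem isCommClassR_iff_eq_connectedComponentIn {ρ : ℝ → ℝ → ℝ≥0∞} {B : Set ℝ}
    (hsep : ∀ x y, 0 < resolventK ρ x y → 0 < resolventK ρ y x →
      y ∈ connectedComponentIn B x)
    (hcomp : ∀ x, ∀ u ∈ connectedComponentIn B x, ∀ v ∈ connectedComponentIn B x,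
      0 < resolventK ρ u v)
    (A : Set ℝ) : IsCommClassR ρ A ↔ ∃ x ∈ B, A = connectedComponentIn B x := by
  constructor
  · rintro ⟨⟨x, hx⟩, hpos, hmax⟩
    have hxx := hpos x hx x hx
    refine ⟨x, connectedComponentIn_subset _ _ (hsep x x hxx hxx), ?_⟩
    exact (hmax _ (fun y hy => hsep x y (hpos x hx y hy) (hpos y hy x hx)) (hcomp x)).symm
  · rintro ⟨x, hx, rfl⟩
    refine ⟨⟨x, mem_connectedComponentIn hx⟩, hcomp x, fun C hC hCpos => ?_⟩
    have hxC := hC (mem_connectedComponentIn hx)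
    exact hC.antisymm' fun y hy => hsep x y (hCpos x hxC y hy) (hCpos y hy x hxC)

/-- The transition density of the chain `X' = f X + ξ` with `ξ ∼ φ`. -/
noncomputable def shiftKernel (f φ : ℝ → ℝ) (x y : ℝ) : ℝ≥0∞ :=
  ENNReal.ofReal (φ (y - f x))

section ShiftKernel

variable {f φ : ℝ → ℝ}

theorem lowerSemicontinuous_shiftKernel (hf : Continuous f) (hφ : LowerSemicontinuous φ) :
    LowerSemicontinuous (Function.uncurry (shiftKernel f φ)) :=
  ENNReal.continuous_ofReal.comp_lowerSemicontinuous
    (hφ.comp (continuous_snd.sub (hf.comp continuous_fst))) ENNReal.ofReal_mono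

theorem shiftKernel_self_pos (hφ : Ioo (-1) 1 ⊆ {t | 0 < φ t}) {x : ℝ}
    (hx : f x - x ∈ Ioo (-1 : ℝ) 1) : 0 < shiftKernel f φ x x :=
  ENNReal.ofReal_pos.2 (hφ ⟨by linarith [hx.2], by linarith [hx.1]⟩)

theorem shiftKernel_eq_zero (hφ : {t | 0 < φ t} ⊆ Ioo (-1) 1) {x y : ℝ}
    (h : y - f x ∉ Ioo (-1 : ℝ) 1) : shiftKernel f φ x y = 0 :=
  ENNReal.ofReal_eq_zero.2 (not_lt.1 fun hpos => h (hφ hpos))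

theorem resolventK_shiftKernel_eq_zero_of_le_of_le (hmono : Monotone f)
    (hφ : {t | 0 < φ t} ⊆ Ioo (-1) 1) {a x y : ℝ} (ha : f a - a ∉ Ioo (-1 : ℝ) 1)
    (hxa : x ≤ a) (hay : a ≤ y) :
    resolventK (shiftKernel f φ) x y = 0 ∨ resolventK (shiftKernel f φ) y x = 0 := by
  rcases not_and_or.1 ha with hlow | hhigh
  · refine Or.inl (resolventK_eq_zero_of_trap (S := Iic a) (T := Iio a) Iio_subset_Iic_self
      (fun z hz w hw => shiftKernel_eq_zero hφ fun hzw => hw ?_) hxa hay.not_gt)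
    exact mem_Iio.2 (by linarith [hmono hz, hzw.2, not_lt.1 hlow])
  · refine Or.inr (resolventK_eq_zero_of_trap (S := Ici a) (T := Ioi a) Ioi_subset_Ici_self
      (fun z hz w hw => shiftKernel_eq_zero hφ fun hzw => hw ?_) hay hxa.not_gt)
    exact mem_Ioi.2 (by linarith [hmono hz, hzw.1, not_lt.1 hhigh])

theorem mem_connectedComponentIn_of_resolventK_pos (hmono : Monotone f)
    (hφ : {t | 0 < φ t} ⊆ Ioo (-1) 1) {x y : ℝ}
    (hxy : 0 < resolventK (shiftKernel f φ) x y) (hyx : 0 < resolventK (shiftKernel f φ) y x) :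
    y ∈ connectedComponentIn {x : ℝ | f x - x ∈ Ioo (-1 : ℝ) 1} x := by
  refine isPreconnected_uIcc.subset_connectedComponentIn left_mem_uIcc (fun a ha => ?_)
    right_mem_uIcc
  by_contra haB
  rcases mem_uIcc.1 ha with ⟨hxa, hay⟩ | ⟨hya, hax⟩
  · rcases resolventK_shiftKernel_eq_zero_of_le_of_le hmono hφ haB hxa hay with h | h
    exacts [hxy.ne' h, hyx.ne' h]
  · rcases resolventK_shiftKernel_eq_zero_of_le_of_le hmono hφ haB hya hax with h | h
    exacts [hyx.ne' h, hxy.ne' h]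

end ShiftKernel

theorem stmt15_general (f : ℝ → ℝ) (hf : Continuous f) (hmono : Monotone f)
    (φ : ℝ → ℝ)
    (hφlsc : LowerSemicontinuous φ)
    (hφpos : {t | 0 < φ t} = Set.Ioo (-1 : ℝ) 1) :
    ∀ A : Set ℝ,
      IsCommClassR (fun x y => ENNReal.ofReal (φ (y - f x))) A ↔
        ∃ x ∈ {x : ℝ | f x - x ∈ Set.Ioo (-1 : ℝ) 1},
          A = connectedComponentIn {x : ℝ | f x - x ∈ Set.Ioo (-1 : ℝ) 1} x := by
  have hρ := lowerSemicontinuous_shiftKernel hf hφlsc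
  refine isCommClassR_iff_eq_connectedComponentIn
    (fun _ _ => mem_connectedComponentIn_of_resolventK_pos hmono hφpos.subset)
    fun x u hu v hv => resolventK_pos_of_isPreconnected hρ isPreconnected_connectedComponentIn
      (fun y hy => shiftKernel_self_pos hφpos.superset ?_) hu hv
  exact (connectedComponentIn_subset _ x hy :)

/-- Let `f : ℝ → ℝ` be continuous nondecreasing, `φ` a lower
semicontinuous bounded probability density with positivity set exactly `(−1,1)`, and
consider the Markov chain with kernel density `ρ(x,y) = φ(y − f(x))`. Let
`B = {x : f(x) − x ∈ (−1,1)}`. Then the communicating classes of the chain are exactly the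
connected components of `B`. -/
theorem stmt15 (f : ℝ → ℝ) (hf : Continuous f) (hmono : Monotone f)
    (φ : ℝ → ℝ) (hφnn : ∀ t, 0 ≤ φ t)
    (hφlsc : LowerSemicontinuous φ) (hφbdd : ∃ M : ℝ, ∀ t, φ t ≤ M)
    (hφint : ∫⁻ t, ENNReal.ofReal (φ t) = 1)
    (hφpos : {t | 0 < φ t} = Set.Ioo (-1 : ℝ) 1) :
    ∀ A : Set ℝ,
      IsCommClassR (fun x y => ENNReal.ofReal (φ (y - f x))) A ↔
        ∃ x ∈ {x : ℝ | f x - x ∈ Set.Ioo (-1 : ℝ) 1},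
          A = connectedComponentIn {x : ℝ | f x - x ∈ Set.Ioo (-1 : ℝ) 1} x :=
  stmt15_general f hf hmono φ hφlsc hφpos
end

section
/- Let (L_n) be empirical measures of a Markov chain on ℝ^d. Suppose that for a measure μ ∈ P(ℝ^d) and functions f(ε,δ) with lim_{ε→0} lim_{δ→0} f(ε,δ) = 0 and constants C_{n,T} with lim_{n→∞} lim_{T→∞} (1/T) log C_{n,T} = 0 and N = N(n,T) = ⌊T/(n + rτ)⌋ (r, τ fixed), the supermultiplicative inequality P(L_n ∈ B̄_LP(μ,δ))^N ≤ C_{n,T} · P(L_T ∈ B̄_LP(μ, f(ε,δ))) holds for all suitable n, T. Then the Ruelle–Lanford function exists at μ: lim_{δ→0} liminf_n (1/n)log P(L_n ∈ B_LP(μ,δ)) = lim_{δ→0} limsup_n (1/n)log P(L_n ∈ B_LP(μ,δ)). -/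
/-!
Write `s_n(δ) = (1/n) log ℙ(d_LP(L_n, μ) < δ)`. Taking logarithms in the supermultiplicative
inequality and dividing by `T` gives, as `T → ∞` with `n` fixed,
`(1/(n + rτ)) log ℙ(d_LP(L_n, μ) ≤ δ) ≤ liminf_T s_T(f(ε, δ)) + c_n`.
Since the log-probability is nonpositive, `1/(n + rτ)` may be replaced by `1/n`, and letting
`n → ∞` bounds `limsup_n s_n(δ)` by `liminf_T s_T(f(ε, δ))`. Choosing `ε` and then `δ` so that
`f(ε, δ)` lies below any prescribed radius yields `s̄(μ) ≤ s̲(μ)`.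
-/

open MeasureTheory Filter Topology
open scoped ENNReal ProbabilityTheory

noncomputable def logRate (p : ℕ → ℝ≥0∞) (n : ℕ) : EReal :=
  (((n : ℝ)⁻¹ : ℝ) : EReal) * ENNReal.log (p n)

theorem logRate_monotone : Monotone logRate := fun _ _ h n =>
  mul_le_mul_of_nonneg_left (ENNReal.log_monotone (h n)) (EReal.coe_nonneg.2 (by positivity))

theorem tendsto_natDiv_div_atTop {m : ℕ} (hm : m ≠ 0) :
    Tendsto (fun T : ℕ => ((T / m : ℕ) : ℝ) / T) atTop (𝓝 (m : ℝ)⁻¹) := by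
  have hmR : (m : ℝ) ≠ 0 := Nat.cast_ne_zero.2 hm
  have hdiv : Tendsto (fun T : ℕ => (T : ℝ) / m) atTop atTop :=
    tendsto_natCast_atTop_atTop.atTop_div_const (by positivity)
  have := (tendsto_nat_floor_div_atTop.comp hdiv).mul_const (m : ℝ)⁻¹
  rw [one_mul] at this
  refine this.congr fun T => ?_
  simp only [Function.comp_apply, Nat.floor_div_eq_div, div_div_eq_mul_div]
  field_simp

theorem coe_sub_log_le_log_of_pow_le {p q : ℝ≥0∞} (hp₀ : p ≠ 0) (hp : p ≠ ⊤) (hq : q ≠ ⊤)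
    {C : ℝ} {N : ℕ} (h : p ^ N ≤ ENNReal.ofReal C * q) :
    ((N * Real.log p.toReal - Real.log C : ℝ) : EReal) ≤ ENNReal.log q := by
  obtain ⟨hC, hq₀⟩ :=
    ENNReal.mul_pos_iff.1 ((ENNReal.pow_pos (pos_iff_ne_zero.2 hp₀) N).trans_le h)
  rw [ENNReal.ofReal_pos] at hC
  have hreal : p.toReal ^ N ≤ C * q.toReal := by
    simpa [ENNReal.toReal_mul, hC.le] using ENNReal.toReal_mono (by finiteness) h
  have hlog := Real.log_le_log (pow_pos (ENNReal.toReal_pos hp₀ hp) N) hreal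
  rw [Real.log_pow, Real.log_mul hC.ne' (ENNReal.toReal_pos hq₀.ne' hq).ne'] at hlog
  rw [ENNReal.log_pos_real hq₀.ne' hq, EReal.coe_le_coe_iff]
  linarith

theorem logRate_le_liminf_logRate_add {p : ℕ → ℝ≥0∞} {n m : ℕ} (hp : p n ≤ 1) (hn : n ≠ 0)
    (hnm : n ≤ m) {q : ℕ → ℝ≥0∞} (hq : ∀ T, q T ≠ ⊤) {C : ℕ → ℝ} {c : ℝ}
    (hC : Tendsto (fun T : ℕ => (T : ℝ)⁻¹ * Real.log (C T)) atTop (𝓝 c))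
    (hpq : ∀ᶠ T in atTop, p n ^ (T / m) ≤ ENNReal.ofReal (C T) * q T) :
    logRate p n ≤ liminf (logRate q) atTop + c := by
  rcases eq_or_ne (p n) 0 with hp₀ | hp₀
  · rw [logRate, hp₀, ENNReal.log_zero, EReal.coe_mul_bot_of_pos (by positivity)]
    exact bot_le
  have hp_top : p n ≠ ⊤ := ne_top_of_le_ne_top ENNReal.one_ne_top hp
  set x := Real.log (p n).toReal
  have hpx : ENNReal.log (p n) = x := ENNReal.log_pos_real hp₀ hp_top
  have hx : x ≤ 0 :=
    Real.log_nonpos ENNReal.toReal_nonneg (by simpa using ENNReal.toReal_mono ENNReal.one_ne_top hp)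
  have hm : m ≠ 0 := by omega
  have hlower : ∀ᶠ T in atTop, (((T / m : ℕ) / T * x - (T : ℝ)⁻¹ * Real.log (C T) : ℝ) : EReal)
      ≤ logRate q T := by
    filter_upwards [hpq] with T hT
    have key := coe_sub_log_le_log_of_pow_le hp₀ hp_top (hq T) hT
    calc (((T / m : ℕ) / T * x - (T : ℝ)⁻¹ * Real.log (C T) : ℝ) : EReal)
        = (((T : ℝ)⁻¹ : ℝ) : EReal) * (((T / m : ℕ) * x - Real.log (C T) : ℝ) : EReal) := by
          rw [← EReal.coe_mul]; congr 1; ring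
      _ ≤ logRate q T :=
          mul_le_mul_of_nonneg_left key (EReal.coe_nonneg.2 (by positivity))
  have hlim : (((m : ℝ)⁻¹ * x - c : ℝ) : EReal) ≤ liminf (logRate q) atTop := by
    have := EReal.tendsto_coe.2 (((tendsto_natDiv_div_atTop hm).mul_const x).sub hC)
    exact this.liminf_eq ▸ liminf_le_liminf hlower
  have hnx : (n : ℝ)⁻¹ * x ≤ (m : ℝ)⁻¹ * x :=
    mul_le_mul_of_nonpos_right (inv_anti₀ (by positivity) (by exact_mod_cast hnm)) hx
  calc logRate p n = (((n : ℝ)⁻¹ * x : ℝ) : EReal) := by rw [logRate, hpx, EReal.coe_mul]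
    _ ≤ (((m : ℝ)⁻¹ * x - c : ℝ) : EReal) + c := by
        rw [← EReal.coe_add, sub_add_cancel]; exact_mod_cast hnx
    _ ≤ liminf (logRate q) atTop + c := by gcongr

theorem limsup_logRate_le_liminf_logRate {p q : ℕ → ℝ≥0∞} (hp : ∀ n, p n ≤ 1)
    (hq : ∀ T, q T ≠ ⊤) {C : ℕ → ℕ → ℝ} {c : ℕ → ℝ}
    (hC : ∀ n, Tendsto (fun T : ℕ => (T : ℝ)⁻¹ * Real.log (C n T)) atTop (𝓝 (c n)))
    (hc : Tendsto c atTop (𝓝 0)) (k : ℕ)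
    (hpq : ∀ᶠ n in atTop, ∀ᶠ T in atTop, p n ^ (T / (n + k)) ≤ ENNReal.ofReal (C n T) * q T) :
    limsup (logRate p) atTop ≤ liminf (logRate q) atTop := by
  set S := liminf (logRate q) atTop
  have hbound : ∀ᶠ n in atTop, logRate p n ≤ S + c n := by
    filter_upwards [hpq, eventually_ne_atTop 0] with n hn hn₀
    exact logRate_le_liminf_logRate_add (hp n) hn₀ (Nat.le_add_right n k) hq (hC n) hn
  have hc' : limsup (fun n => (c n : EReal)) atTop = 0 := (EReal.tendsto_coe.2 hc).limsup_eq
  calc limsup (logRate p) atTop ≤ limsup (fun n => S + c n) atTop := limsup_le_limsup hbound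
    _ ≤ limsup (fun _ => S) atTop + limsup (fun n => (c n : EReal)) atTop :=
        EReal.limsup_add_le (by simp [hc']) (by simp [hc'])
    _ = S := by rw [limsup_const, hc', add_zero]

theorem stmt17_general {d : ℕ} {Ω : Type*} [MeasureSpace Ω] [IsProbabilityMeasure (ℙ : Measure Ω)]
    (L : ℕ → Ω → Measure (EuclideanSpace ℝ (Fin d)))
    (μ : Measure (EuclideanSpace ℝ (Fin d)))
    (r τ : ℕ)
    (f : ℝ → ℝ → ℝ) (g : ℝ → ℝ)
    (hfg : ∀ ε > (0:ℝ), Tendsto (f ε) (𝓝[>] 0) (𝓝 (g ε)))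
    (hg : Tendsto g (𝓝[>] 0) (𝓝 0))
    (C : ℕ → ℕ → ℝ) (c : ℕ → ℝ)
    (hCc : ∀ n, Tendsto (fun T : ℕ => (T : ℝ)⁻¹ * Real.log (C n T)) atTop (𝓝 (c n)))
    (hc : Tendsto c atTop (𝓝 0))
    (hsuper : ∀ ε > (0:ℝ), ∀ δ > (0:ℝ), ∃ n₀ : ℕ, ∀ n ≥ n₀, ∃ T₀ : ℕ, ∀ T ≥ T₀,
      (ℙ {ω | levyProkhorovDist (L n ω) μ ≤ δ}) ^ (T / (n + r * τ))
        ≤ ENNReal.ofReal (C n T) * ℙ {ω | levyProkhorovDist (L T ω) μ ≤ f ε δ}) :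
    (⨅ δ : {x : ℝ // 0 < x}, Filter.liminf (fun n : ℕ =>
        (((n : ℝ)⁻¹ : ℝ) : EReal) *
          ENNReal.log (ℙ {ω | levyProkhorovDist (L n ω) μ < δ.1})) atTop)
    = (⨅ δ : {x : ℝ // 0 < x}, Filter.limsup (fun n : ℕ =>
        (((n : ℝ)⁻¹ : ℝ) : EReal) *
          ENNReal.log (ℙ {ω | levyProkhorovDist (L n ω) μ < δ.1})) atTop) := by
  refine le_antisymm (iInf_mono fun _ => liminf_le_limsup) (le_iInf fun δ' => ?_)
  obtain ⟨ε, hgε, hε⟩ := ((hg.eventually_lt_const δ'.2).and self_mem_nhdsWithin).exists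
  obtain ⟨δ, hfδ, hδ⟩ := (((hfg ε hε).eventually_lt_const hgε).and self_mem_nhdsWithin).exists
  obtain ⟨n₀, hn₀⟩ := hsuper ε hε δ hδ
  refine iInf_le_of_le ⟨δ, hδ⟩ ?_
  calc limsup (logRate fun n => ℙ {ω | levyProkhorovDist (L n ω) μ < δ}) atTop
      ≤ limsup (logRate fun n => ℙ {ω | levyProkhorovDist (L n ω) μ ≤ δ}) atTop :=
        limsup_le_limsup (.of_forall <| logRate_monotone fun _ =>
          measure_mono fun _ (h : _ < δ) => h.le)
    _ ≤ liminf (logRate fun T => ℙ {ω | levyProkhorovDist (L T ω) μ ≤ f ε δ}) atTop :=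
        limsup_logRate_le_liminf_logRate (fun _ => prob_le_one) (fun _ => measure_ne_top _ _)
          hCc hc (r * τ) (eventually_atTop.2 ⟨n₀, fun n hn => eventually_atTop.2 (hn₀ n hn)⟩)
    _ ≤ liminf (logRate fun n => ℙ {ω | levyProkhorovDist (L n ω) μ < δ'}) atTop :=
        liminf_le_liminf (.of_forall <| logRate_monotone fun _ =>
          measure_mono fun _ h => h.trans_lt hfδ)

/-- Let `(L_n)` be the (random) empirical measures of a Markov chain on
`ℝ^d`. Suppose that for `μ ∈ P(ℝ^d)`, functions `f(ε, δ)` with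
`lim_{ε→0} lim_{δ→0} f(ε,δ) = 0`, constants `C_{n,T}` with
`lim_{n→∞} lim_{T→∞} (1/T) log C_{n,T} = 0`, and `N = ⌊T/(n + rτ)⌋` (`r`, `τ` fixed), the
supermultiplicative inequality
`P(L_n ∈ B̄_LP(μ,δ))^N ≤ C_{n,T} · P(L_T ∈ B̄_LP(μ, f(ε,δ)))`
holds for all suitable `n, T`. Then the Ruelle–Lanford function exists at `μ`:
`lim_{δ→0} liminf_n (1/n) log P(L_n ∈ B_LP(μ,δ)) = lim_{δ→0} limsup_n (1/n) log P(L_n ∈ B_LP(μ,δ))`,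
the limits as `δ → 0⁺` being written as infima over `δ > 0` (the quantities are monotone
in `δ`). -/
theorem stmt17 {d : ℕ} {Ω : Type*} [MeasureSpace Ω] [IsProbabilityMeasure (ℙ : Measure Ω)]
    (L : ℕ → Ω → Measure (EuclideanSpace ℝ (Fin d)))
    (hL : ∀ n ω, IsProbabilityMeasure (L n ω))
    (μ : Measure (EuclideanSpace ℝ (Fin d))) (hμ : IsProbabilityMeasure μ)
    (r τ : ℕ)
    (f : ℝ → ℝ → ℝ) (g : ℝ → ℝ)
    (hf0 : ∀ ε > (0:ℝ), ∀ δ > (0:ℝ), 0 ≤ f ε δ)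
    (hfg : ∀ ε > (0:ℝ), Tendsto (f ε) (𝓝[>] 0) (𝓝 (g ε)))
    (hg : Tendsto g (𝓝[>] 0) (𝓝 0))
    (C : ℕ → ℕ → ℝ) (c : ℕ → ℝ)
    (hCc : ∀ n, Tendsto (fun T : ℕ => (T : ℝ)⁻¹ * Real.log (C n T)) atTop (𝓝 (c n)))
    (hc : Tendsto c atTop (𝓝 0))
    (hsuper : ∀ ε > (0:ℝ), ∀ δ > (0:ℝ), ∃ n₀ : ℕ, ∀ n ≥ n₀, ∃ T₀ : ℕ, ∀ T ≥ T₀,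
      (ℙ {ω | levyProkhorovDist (L n ω) μ ≤ δ}) ^ (T / (n + r * τ))
        ≤ ENNReal.ofReal (C n T) * ℙ {ω | levyProkhorovDist (L T ω) μ ≤ f ε δ}) :
    (⨅ δ : {x : ℝ // 0 < x}, Filter.liminf (fun n : ℕ =>
        (((n : ℝ)⁻¹ : ℝ) : EReal) *
          ENNReal.log (ℙ {ω | levyProkhorovDist (L n ω) μ < δ.1})) atTop)
    = (⨅ δ : {x : ℝ // 0 < x}, Filter.limsup (fun n : ℕ =>
        (((n : ℝ)⁻¹ : ℝ) : EReal) *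
          ENNReal.log (ℙ {ω | levyProkhorovDist (L n ω) μ < δ.1})) atTop) :=
  stmt17_general L μ r τ f g hfg hg C c hCc hc hsuper
end

section
/- Let μ = λ₁μ₁ + λ₂μ₂ with λ₁, λ₂ > 0, λ₁ + λ₂ = 1, where μ₁, μ₂ are supported in disjoint open sets C⁽¹⁾, C⁽²⁾ respectively, and suppose there is a compact K⁰ ⊆ C⁽¹⁾ ∪ C⁽²⁾ with μ_γ(K⁰) ≥ 1 − ε for γ = 1,2, K⁽²⁾ the part of the δ-enlargement K of K⁰ in C⁽²⁾ with d(C⁽¹⁾, K⁽²⁾) > δ, and ε < min(λ₁,λ₂)/2, 2δ < min(λ₁ − ε, λ₂ − ε). If ν ∈ P(ℝ^d) satisfies d_LP(μ,ν) < δ and ν(C⁽¹⁾) > λ₁ − ε > 0, ν(C⁽²⁾) > λ₂ − ε > 0, and ν_γ denotes the normalized restriction of ν to C⁽ᵞ⁾, then d_LP(μ_γ, ν_γ) ≤ (ε/λ_γ)(1 + λ_{3−γ}) + δ(1 + 1/λ_γ) for γ ∈ {1,2}. -/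
open MeasureTheory Metric
open scoped ENNReal

/-- Key auxiliary lemma: one-sided Lévy–Prokhorov bound for one component of the mixture. -/
lemma stmt19_aux {d : ℕ} {lam₁ lam₂ : ℝ} (hl₁ : 0 < lam₁) (hl₂ : 0 < lam₂)
    (hsum : lam₁ + lam₂ = 1)
    {μ₁ μ₂ : Measure (EuclideanSpace ℝ (Fin d))}
    (hμ₁ : IsProbabilityMeasure μ₁) (hμ₂ : IsProbabilityMeasure μ₂)
    {C₁ C₂ : Set (EuclideanSpace ℝ (Fin d))}
    (hC₁ : IsOpen C₁) (hC₂ : IsOpen C₂) (hCdisj : Disjoint C₁ C₂)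
    (hsupp₂ : μ₂ C₂ = 1)
    {ε δ : ℝ} (hε : 0 < ε) (hδ : 0 < δ) (hεlam : ε < lam₁)
    {K₀ : Set (EuclideanSpace ℝ (Fin d))} (hK₀m : MeasurableSet K₀)
    (hK₀sub : K₀ ⊆ C₁ ∪ C₂)
    (hK₀μ₂ : ENNReal.ofReal (1 - ε) ≤ μ₂ K₀)
    (hfar₁ : ∀ x ∈ C₁, ∀ y ∈ cthickening δ K₀ ∩ C₂, δ < dist x y)
    {ν : Measure (EuclideanSpace ℝ (Fin d))} (hν : IsProbabilityMeasure ν)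
    (hclose : levyProkhorovEDist (ENNReal.ofReal lam₁ • μ₁ + ENNReal.ofReal lam₂ • μ₂) ν
        < ENNReal.ofReal δ)
    (hνC₁ : ENNReal.ofReal (lam₁ - ε) < ν C₁) :
    levyProkhorovDist μ₁ ((ν C₁)⁻¹ • ν.restrict C₁)
        ≤ (ε / lam₁) * (1 + lam₂) + δ * (1 + 1 / lam₁) := by
  have hlam₁lt1 : lam₁ < 1 := by linarith
  have hεle1 : ε ≤ 1 := by linarith
  have hC₁m := hC₁.measurableSet
  have hlamε : 0 < lam₁ - ε := by linarith
  have hs0 : ν C₁ ≠ 0 :=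
    ((ENNReal.ofReal_pos.mpr hlamε).trans hνC₁).ne'
  have hstop : ν C₁ ≠ ⊤ := measure_ne_top ν C₁
  haveI : IsProbabilityMeasure ((ν C₁)⁻¹ • ν.restrict C₁) := by
    constructor
    rw [Measure.smul_apply, smul_eq_mul, Measure.restrict_apply_univ,
      ENNReal.inv_mul_cancel hs0 hstop]
  -- positivity of the target bound
  have hq1 : 0 < ε / lam₁ := div_pos hε hl₁
  have hq2 : 0 < 1 / lam₁ := by
    rw [one_div]
    exact inv_pos.mpr hl₁
  have ht₁ : 0 ≤ (ε / lam₁) * (1 + lam₂) + δ * (1 + 1 / lam₁) := by nlinarith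
  rw [levyProkhorovDist_comm]
  refine levyProkhorovDist_le_of_forall_le _ _ ht₁ ?_
  intro r B hr hB
  -- μ₂ gives zero mass to C₁
  have hμ₂C₁ : μ₂ C₁ = 0 := by
    have hcc : μ₂ C₂ᶜ = 0 := by
      rw [measure_compl hC₂.measurableSet (measure_ne_top _ _), measure_univ, hsupp₂,
        tsub_self]
    exact measure_mono_null (fun x hx h2 => Set.disjoint_left.mp hCdisj hx h2) hcc
  -- μ₂ gives small mass to the complement of K₀
  have hμ₂K₀c : μ₂ K₀ᶜ ≤ ENNReal.ofReal ε := by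
    rw [measure_compl hK₀m (measure_ne_top _ _), measure_univ]
    calc 1 - μ₂ K₀ ≤ 1 - ENNReal.ofReal (1 - ε) := tsub_le_tsub_left hK₀μ₂ 1
    _ = ENNReal.ofReal ε := by
        rw [← ENNReal.ofReal_one, ← ENNReal.ofReal_sub _ (by linarith : (0:ℝ) ≤ 1 - ε)]
        norm_num
  -- the δ-thickening of B ∩ C₁ intersected with K₀ is inside C₁
  have hTK₀C₁ : thickening δ (B ∩ C₁) ∩ K₀ ⊆ C₁ := by
    rintro z ⟨hzT, hzK⟩
    rcases hK₀sub hzK with h | h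
    · exact h
    · exfalso
      obtain ⟨a, haBC, hda⟩ := Metric.mem_thickening_iff.mp hzT
      have hfar := hfar₁ a haBC.2 z ⟨self_subset_cthickening K₀ hzK, h⟩
      rw [dist_comm] at hda
      linarith
  have hμ₂T : μ₂ (thickening δ (B ∩ C₁)) ≤ ENNReal.ofReal ε := by
    calc μ₂ (thickening δ (B ∩ C₁))
        ≤ μ₂ ((thickening δ (B ∩ C₁) ∩ K₀) ∪ K₀ᶜ) := by
          apply measure_mono
          intro x hx
          by_cases h : x ∈ K₀
          · exact Or.inl ⟨hx, h⟩
          · exact Or.inr h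
    _ ≤ μ₂ (thickening δ (B ∩ C₁) ∩ K₀) + μ₂ K₀ᶜ := measure_union_le (μ := μ₂) _ _
    _ ≤ 0 + ENNReal.ofReal ε :=
        add_le_add ((measure_mono hTK₀C₁).trans hμ₂C₁.le) hμ₂K₀c
    _ = ENNReal.ofReal ε := zero_add _
  -- the main Lévy-Prokhorov estimate for ν (B ∩ C₁)
  have hν_ineq : ν (B ∩ C₁) ≤ ENNReal.ofReal lam₁ * μ₁ (thickening δ B)
      + (ENNReal.ofReal lam₂ * ENNReal.ofReal ε + ENNReal.ofReal δ) := by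
    have h0 := right_measure_le_of_levyProkhorovEDist_lt hclose (hB.inter hC₁m)
    rw [ENNReal.toReal_ofReal hδ.le] at h0
    refine h0.trans ?_
    have hexp : (ENNReal.ofReal lam₁ • μ₁ + ENNReal.ofReal lam₂ • μ₂)
        (thickening δ (B ∩ C₁))
        = ENNReal.ofReal lam₁ * μ₁ (thickening δ (B ∩ C₁))
          + ENNReal.ofReal lam₂ * μ₂ (thickening δ (B ∩ C₁)) := by
      simp [Measure.add_apply, Measure.smul_apply, smul_eq_mul]
    rw [hexp, add_assoc]
    refine add_le_add (mul_le_mul_right ?_ _) (add_le_add (mul_le_mul_right hμ₂T _) le_rfl)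
    exact measure_mono (thickening_subset_of_subset δ Set.inter_subset_left)
  -- pass to real numbers
  set s := (ν C₁).toReal with hs_def
  set n := (ν (B ∩ C₁)).toReal with hn_def
  set m := (μ₁ (thickening δ B)).toReal with hm_def
  set m' := (μ₁ (thickening r B)).toReal with hm'_def
  have hδr : δ < r := by
    refine lt_of_le_of_lt ?_ hr
    nlinarith
  have h_n : n ≤ lam₁ * m + (lam₂ * ε + δ) := by
    have hfin : ENNReal.ofReal lam₁ * μ₁ (thickening δ B)
        + (ENNReal.ofReal lam₂ * ENNReal.ofReal ε + ENNReal.ofReal δ) ≠ ⊤ := by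
      finiteness
    have := ENNReal.toReal_mono hfin hν_ineq
    rw [ENNReal.toReal_add (by finiteness) (by finiteness),
      ENNReal.toReal_add (by finiteness) (by finiteness),
      ENNReal.toReal_mul, ENNReal.toReal_mul, ENNReal.toReal_ofReal hl₁.le,
      ENNReal.toReal_ofReal hl₂.le, ENNReal.toReal_ofReal hε.le,
      ENNReal.toReal_ofReal hδ.le] at this
    exact this
  have hs_lb : lam₁ - ε ≤ s :=
    le_of_lt ((ENNReal.ofReal_lt_iff_lt_toReal hlamε.le hstop).mp hνC₁)
  have hs_pos : 0 < s := by linarith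
  have hns : n ≤ s := ENNReal.toReal_mono hstop (measure_mono Set.inter_subset_right)
  have hn0 : 0 ≤ n := ENNReal.toReal_nonneg
  have hm0 : 0 ≤ m := ENNReal.toReal_nonneg
  have hmm' : m ≤ m' :=
    ENNReal.toReal_mono (measure_ne_top _ _) (measure_mono (thickening_mono hδr.le B))
  -- the key real-number inequality
  have hq : n / s ≤ m' + r := by
    have h1 : n / s * s = n := div_mul_cancel₀ n hs_pos.ne'
    have h2 : n / s ≤ 1 := (div_le_one hs_pos).mpr hns
    have h3 : 0 ≤ n / s := div_nonneg hn0 hs_pos.le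
    have hkey : lam₁ * (n / s) ≤ lam₁ * m + (ε * (1 + lam₂) + δ) := by
      nlinarith [mul_nonneg (by linarith : (0:ℝ) ≤ 1 - n / s)
          (by linarith : (0:ℝ) ≤ s - (lam₁ - ε)),
        mul_le_mul_of_nonneg_right h2 hε.le]
    have hkey2 : n / s ≤ (lam₁ * m + (ε * (1 + lam₂) + δ)) / lam₁ := by
      rw [le_div_iff₀ hl₁]
      linarith
    have heq : (lam₁ * m + (ε * (1 + lam₂) + δ)) / lam₁
        = m + ((ε / lam₁) * (1 + lam₂) + δ * (1 / lam₁)) := by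
      field_simp
    rw [heq] at hkey2
    -- m + bound ≤ m' + r since m ≤ m' and bound + δ ≤ target < r
    have : (ε / lam₁) * (1 + lam₂) + δ * (1 / lam₁) + δ
        = (ε / lam₁) * (1 + lam₂) + δ * (1 + 1 / lam₁) := by ring
    linarith
  -- convert back to ENNReal
  show ((ν C₁)⁻¹ • ν.restrict C₁) B ≤ μ₁ (thickening r B) + ENNReal.ofReal r
  rw [Measure.smul_apply, smul_eq_mul, Measure.restrict_apply hB]
  have hfin1 : (ν C₁)⁻¹ * ν (B ∩ C₁) ≠ ⊤ :=
    ENNReal.mul_ne_top (ENNReal.inv_ne_top.mpr hs0) (measure_ne_top _ _)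
  have hr0 : (0:ℝ) ≤ r := le_trans ht₁ hr.le
  have hfin2 : μ₁ (thickening r B) + ENNReal.ofReal r ≠ ⊤ := by finiteness
  rw [← ENNReal.toReal_le_toReal hfin1 hfin2, ENNReal.toReal_mul, ENNReal.toReal_inv,
    ENNReal.toReal_add (measure_ne_top _ _) ENNReal.ofReal_ne_top,
    ENNReal.toReal_ofReal hr0]
  calc (ν C₁).toReal⁻¹ * (ν (B ∩ C₁)).toReal = n / s := by
        rw [hn_def, hs_def, inv_mul_eq_div]
  _ ≤ m' + r := hq

/-- Let `μ = λ₁μ₁ + λ₂μ₂` with `λ₁, λ₂ > 0`, `λ₁ + λ₂ = 1`, where `μ₁`,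
`μ₂` are probability measures supported in disjoint open sets `C¹`, `C²`, and suppose there
is a compact `K⁰ ⊆ C¹ ∪ C²` with `μ_γ(K⁰) ≥ 1 − ε` for `γ = 1, 2`, the part of the
`δ`-enlargement `K` of `K⁰` in `C²` being at distance `> δ` from `C¹` (and symmetrically),
with `ε < min(λ₁, λ₂)/2` and `2δ < min(λ₁ − ε, λ₂ − ε)`. If a probability measure `ν`
satisfies `d_LP(μ, ν) < δ`, `ν(C¹) > λ₁ − ε > 0`, `ν(C²) > λ₂ − ε > 0`, and `ν_γ` denotes
the normalized restriction of `ν` to `C^γ`, then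
`d_LP(μ_γ, ν_γ) ≤ (ε/λ_γ)(1 + λ_{3−γ}) + δ(1 + 1/λ_γ)` for `γ ∈ {1, 2}`. -/
theorem stmt19 {d : ℕ}
    (lam₁ lam₂ : ℝ) (hl₁ : 0 < lam₁) (hl₂ : 0 < lam₂) (hsum : lam₁ + lam₂ = 1)
    (μ₁ μ₂ : Measure (EuclideanSpace ℝ (Fin d)))
    (hμ₁ : IsProbabilityMeasure μ₁) (hμ₂ : IsProbabilityMeasure μ₂)
    (C₁ C₂ : Set (EuclideanSpace ℝ (Fin d)))
    (hC₁ : IsOpen C₁) (hC₂ : IsOpen C₂) (hCdisj : Disjoint C₁ C₂)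
    (hsupp₁ : μ₁ C₁ = 1) (hsupp₂ : μ₂ C₂ = 1)
    (ε δ : ℝ) (hε : 0 < ε) (hδ : 0 < δ)
    (hεsmall : ε < min (lam₁ / 2) (lam₂ / 2))
    (hδsmall : 2 * δ < min (lam₁ - ε) (lam₂ - ε))
    (K₀ : Set (EuclideanSpace ℝ (Fin d))) (hK₀ : IsCompact K₀) (hK₀sub : K₀ ⊆ C₁ ∪ C₂)
    (hK₀μ₁ : ENNReal.ofReal (1 - ε) ≤ μ₁ K₀) (hK₀μ₂ : ENNReal.ofReal (1 - ε) ≤ μ₂ K₀)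
    (hfar₁ : ∀ x ∈ C₁, ∀ y ∈ cthickening δ K₀ ∩ C₂, δ < dist x y)
    (hfar₂ : ∀ x ∈ C₂, ∀ y ∈ cthickening δ K₀ ∩ C₁, δ < dist x y)
    (ν : Measure (EuclideanSpace ℝ (Fin d))) (hν : IsProbabilityMeasure ν)
    (hνclose : levyProkhorovDist (ENNReal.ofReal lam₁ • μ₁ + ENNReal.ofReal lam₂ • μ₂) ν < δ)
    (hνC₁ : ENNReal.ofReal (lam₁ - ε) < ν C₁) (hνC₂ : ENNReal.ofReal (lam₂ - ε) < ν C₂) :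
    levyProkhorovDist μ₁ ((ν C₁)⁻¹ • ν.restrict C₁)
        ≤ (ε / lam₁) * (1 + lam₂) + δ * (1 + 1 / lam₁) ∧
    levyProkhorovDist μ₂ ((ν C₂)⁻¹ • ν.restrict C₂)
        ≤ (ε / lam₂) * (1 + lam₁) + δ * (1 + 1 / lam₂) := by
  haveI : IsProbabilityMeasure (ENNReal.ofReal lam₁ • μ₁ + ENNReal.ofReal lam₂ • μ₂) := by
    constructor
    simp only [Measure.add_apply, Measure.smul_apply, smul_eq_mul, measure_univ, mul_one]
    rw [← ENNReal.ofReal_add hl₁.le hl₂.le, hsum, ENNReal.ofReal_one]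
  have hclose : levyProkhorovEDist (ENNReal.ofReal lam₁ • μ₁ + ENNReal.ofReal lam₂ • μ₂) ν
      < ENNReal.ofReal δ :=
    (ENNReal.lt_ofReal_iff_toReal_lt (levyProkhorovEDist_ne_top _ _)).mpr hνclose
  have hε₁ : ε < lam₁ := by
    have := hεsmall.trans_le (min_le_left _ _)
    linarith
  have hε₂ : ε < lam₂ := by
    have := hεsmall.trans_le (min_le_right _ _)
    linarith
  have hK₀m : MeasurableSet K₀ := hK₀.isClosed.measurableSet
  constructor
  · exact stmt19_aux hl₁ hl₂ hsum hμ₁ hμ₂ hC₁ hC₂ hCdisj hsupp₂ hε hδ hε₁ hK₀m hK₀sub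
      hK₀μ₂ hfar₁ hν hclose hνC₁
  · have hclose' : levyProkhorovEDist (ENNReal.ofReal lam₂ • μ₂ + ENNReal.ofReal lam₁ • μ₁) ν
        < ENNReal.ofReal δ := by rwa [add_comm] at hclose
    exact stmt19_aux hl₂ hl₁ (by linarith) hμ₂ hμ₁ hC₂ hC₁ hCdisj.symm hsupp₁ hε hδ hε₂
      hK₀m (by rwa [Set.union_comm]) hK₀μ₁ hfar₂ hν hclose' hνC₂
end
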